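/- arXiv:math/0611296 — 7 statements merged into one kernel-verified Lean document; each statement's English description precedes it below -/
import Mathlib

section
/- Let A be an associative unital ring and let U, D ∈ A satisfy DU + UD = 1. Then for all integers k ≥ 1 and l ≥ 0: (i) DU^k = ε(k)U^{k−1} + (−1)^k U^k D; (ii) D^k U = ε(k)D^{k−1} + (−1)^k U D^k; (iii) D^l U^{k+l} = U^k · ∏_{s=k+1}^{k+l} ((−1)^s UD + ε(s)); (iv) D^{k+l} U^l = (∏_{s=k+1}^{k+l} ((−1)^s UD + ε(s))) · D^k, where in (iii) and (iv) also k ≥ 0 is allowed and the factors of the products commute pairwise. -/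
/-!
From `DU = 1 - UD` one gets `D U² = U - U D U = U² D`, and likewise `D² U = U D²`: squares
commute with the other generator, so computing `D U^k` or `D^k U` only ever moves one letter past
the other, which gives (i) and (ii). Rewritten as `D U^{n+1} = U^n ((-1)^{n+1} UD + ε(n+1))`,
(i) lets one `D` at a time be absorbed into `U^{k+l}`, giving (iii); (iv) is the mirror argument
with (ii), where the new factor has to pass the earlier ones, which it can since all factors are
polynomials in `UD`.
-/

section
variable {A : Type*} [Ring A]

section Anticommuting
variable {a b : A}

theorem Commute.pow_two_mul_right_of_mul_add_mul_eq_one (h : a * b + b * a = 1) (m : ℕ) :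
    Commute a (b ^ (2 * m)) := by
  have hab : a * b = 1 - b * a := eq_sub_of_add_eq h
  rw [pow_mul]
  refine Commute.pow_right ?_ m
  calc a * b ^ 2 = (1 - b * a) * b := by rw [sq, ← mul_assoc, hab]
    _ = b - b * (a * b) := by noncomm_ring
    _ = b - b * (1 - b * a) := by rw [hab]
    _ = b ^ 2 * a := by noncomm_ring

/-- Also true for `k = 0`, where the truncated `k - 1` is harmless since `ε 0 = 0`. -/
theorem mul_pow_of_mul_add_mul_eq_one (h : a * b + b * a = 1) (k : ℕ) :
    a * b ^ k = (if Odd k then 1 else 0) * b ^ (k - 1) + (-1) ^ k * (b ^ k * a) := by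
  have hab : a * b = 1 - b * a := eq_sub_of_add_eq h
  obtain ⟨m, rfl | rfl⟩ := Nat.even_or_odd' k
  · have hk : Even (2 * m) := even_two_mul m
    rw [if_neg (Nat.not_odd_iff_even.mpr hk), hk.neg_one_pow, zero_mul, zero_add, one_mul]
    exact (Commute.pow_two_mul_right_of_mul_add_mul_eq_one h m).eq
  · have hk : Odd (2 * m + 1) := odd_two_mul_add_one m
    rw [if_pos hk, hk.neg_one_pow, Nat.add_sub_cancel, pow_succ, ← mul_assoc,
      (Commute.pow_two_mul_right_of_mul_add_mul_eq_one h m).eq, mul_assoc, hab]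
    noncomm_ring

theorem pow_mul_of_mul_add_mul_eq_one (h : a * b + b * a = 1) (k : ℕ) :
    a ^ k * b = (if Odd k then 1 else 0) * a ^ (k - 1) + (-1) ^ k * (b * a ^ k) := by
  have hab : a * b = 1 - b * a := eq_sub_of_add_eq h
  have hba : b * a + a * b = 1 := by rwa [add_comm]
  obtain ⟨m, rfl | rfl⟩ := Nat.even_or_odd' k
  · have hk : Even (2 * m) := even_two_mul m
    rw [if_neg (Nat.not_odd_iff_even.mpr hk), hk.neg_one_pow, zero_mul, zero_add, one_mul]
    exact (Commute.pow_two_mul_right_of_mul_add_mul_eq_one hba m).eq.symm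
  · have hk : Odd (2 * m + 1) := odd_two_mul_add_one m
    rw [if_pos hk, hk.neg_one_pow, Nat.add_sub_cancel, pow_succ, mul_assoc, hab, mul_sub,
      ← mul_assoc _ b, ← (Commute.pow_two_mul_right_of_mul_add_mul_eq_one hba m).eq]
    noncomm_ring

end Anticommuting

/-- Under `DU + UD = 1` this is `UD` for even `s` and `DU` for odd `s`. -/
def alternatingFactor (U D : A) (s : ℕ) : A :=
  (-1) ^ s * (U * D) + if Odd s then 1 else 0

theorem Commute.alternatingFactor_right {U D x : A} (hx : Commute x (U * D)) (s : ℕ) :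
    Commute x (alternatingFactor U D s) :=
  (((Commute.neg_one_right x).pow_right s).mul_right hx).add_right (by split_ifs <;> simp)

theorem commute_alternatingFactor (U D : A) (s t : ℕ) :
    Commute (alternatingFactor U D s) (alternatingFactor U D t) :=
  ((Commute.refl _).alternatingFactor_right s).symm.alternatingFactor_right t

variable {U D : A}

theorem mul_pow_succ_eq_pow_mul_alternatingFactor (h : D * U + U * D = 1) (n : ℕ) :
    D * U ^ (n + 1) = U ^ n * alternatingFactor U D (n + 1) := by
  rw [mul_pow_of_mul_add_mul_eq_one h, Nat.add_sub_cancel, alternatingFactor, mul_add, add_comm,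
    pow_succ U, mul_assoc, ((Commute.neg_one_left _).pow_left _).left_comm]
  congr 1
  split_ifs <;> simp

theorem pow_succ_mul_eq_alternatingFactor_mul_pow (h : D * U + U * D = 1) (n : ℕ) :
    D ^ (n + 1) * U = alternatingFactor U D (n + 1) * D ^ n := by
  rw [pow_mul_of_mul_add_mul_eq_one h, Nat.add_sub_cancel, alternatingFactor, add_mul, add_comm,
    pow_succ' D, mul_assoc, ← mul_assoc U, mul_assoc]

theorem pow_mul_pow_add_eq_pow_mul_prod (h : D * U + U * D = 1) (k l : ℕ) :
    D ^ l * U ^ (k + l) =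
      U ^ k * ((List.range l).map fun j => alternatingFactor U D (k + 1 + j)).prod := by
  induction l with
  | zero => simp
  | succ l ih =>
    rw [List.prod_range_succ, ← add_assoc, pow_succ D, mul_assoc,
      mul_pow_succ_eq_pow_mul_alternatingFactor h, ← mul_assoc, ih, mul_assoc, add_right_comm]

theorem pow_add_mul_pow_eq_prod_mul_pow (h : D * U + U * D = 1) (k l : ℕ) :
    D ^ (k + l) * U ^ l =
      ((List.range l).map fun j => alternatingFactor U D (k + 1 + j)).prod * D ^ k := by
  induction l with
  | zero => simp
  | succ l ih =>
    have hcomm : Commute (alternatingFactor U D (k + 1 + l))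
        ((List.range l).map fun j => alternatingFactor U D (k + 1 + j)).prod :=
      Commute.list_prod_right _ _ fun x hx => by
        obtain ⟨j, -, rfl⟩ := List.mem_map.mp hx
        exact commute_alternatingFactor U D _ _
    rw [List.prod_range_succ, ← add_assoc, pow_succ' U, ← mul_assoc,
      pow_succ_mul_eq_alternatingFactor_mul_pow h, mul_assoc, ih, ← mul_assoc, ← hcomm.eq,
      add_right_comm]

end

/-- Let `A` be an associative unital ring and `U D : A` satisfy
`DU + UD = 1`.  With `ε k = 1` if `k` is odd and `0` if `k` is even, the four
identities of Lemma 2.2 hold, and the factors of the products commute pairwise. -/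
theorem statement0 {A : Type*} [Ring A] (U D : A) (h : D * U + U * D = 1) :
    (∀ k : ℕ, 1 ≤ k →
      D * U ^ k = (if Odd k then (1 : A) else 0) * U ^ (k - 1) + (-1) ^ k * (U ^ k * D)) ∧
    (∀ k : ℕ, 1 ≤ k →
      D ^ k * U = (if Odd k then (1 : A) else 0) * D ^ (k - 1) + (-1) ^ k * (U * D ^ k)) ∧
    (∀ k l : ℕ,
      D ^ l * U ^ (k + l) =
        U ^ k * ((List.range l).map
          (fun j => (-1 : A) ^ (k + 1 + j) * (U * D)
            + (if Odd (k + 1 + j) then (1 : A) else 0))).prod) ∧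
    (∀ k l : ℕ,
      D ^ (k + l) * U ^ l =
        ((List.range l).map
          (fun j => (-1 : A) ^ (k + 1 + j) * (U * D)
            + (if Odd (k + 1 + j) then (1 : A) else 0))).prod * D ^ k) ∧
    (∀ s t : ℕ, Commute ((-1 : A) ^ s * (U * D) + (if Odd s then (1 : A) else 0))
        ((-1 : A) ^ t * (U * D) + (if Odd t then (1 : A) else 0))) :=
  ⟨fun k _ => mul_pow_of_mul_add_mul_eq_one h k,
    fun k _ => pow_mul_of_mul_add_mul_eq_one h k,
    pow_mul_pow_add_eq_pow_mul_prod h,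
    pow_add_mul_pow_eq_prod_mul_pow h,
    commute_alternatingFactor U D⟩
end

section
/- Let A be an associative unital ring and let U, D ∈ A satisfy DU + UD = 1. Then for every integer n ≥ 1: D^n U^n = U^n D^n if n is even, and D^n U^n = U^{n−1} D^{n−1} − U^n D^n if n is odd. -/
/-!
From `DU + UD = 1` one gets `D²U = D - DUD = UD²` and symmetrically `DU² = U²D`, so `D²` and `U²`
are central in the subring generated by `U` and `D`. Even powers therefore commute, and for odd
powers one factor `DU = 1 - UD` is peeled off from the middle of `D^(2m+1) U^(2m+1)`.
-/

section MulAddMulEqOne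

variable {R : Type*} [Ring R] {a b : R}

theorem commute_sq_of_mul_add_mul_eq_one (h : a * b + b * a = 1) : Commute (a ^ 2) b := by
  have hab : a * b = 1 - b * a := eq_sub_of_add_eq h
  calc a ^ 2 * b = a * (1 - b * a) := by rw [sq, mul_assoc, hab]
    _ = a - (a * b) * a := by noncomm_ring
    _ = a - (1 - b * a) * a := by rw [hab]
    _ = b * a ^ 2 := by noncomm_ring

theorem commute_pow_two_mul_of_mul_add_mul_eq_one (h : a * b + b * a = 1) (m k : ℕ) :
    Commute (a ^ (2 * m)) (b ^ k) := by
  rw [pow_mul]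
  exact ((commute_sq_of_mul_add_mul_eq_one h).pow_left m).pow_right k

theorem pow_two_mul_mul_pow_two_mul_of_mul_add_mul_eq_one (h : a * b + b * a = 1) (m : ℕ) :
    a ^ (2 * m) * b ^ (2 * m) = b ^ (2 * m) * a ^ (2 * m) :=
  commute_pow_two_mul_of_mul_add_mul_eq_one h m (2 * m)

theorem pow_two_mul_add_one_mul_pow_two_mul_add_one_of_mul_add_mul_eq_one
    (h : a * b + b * a = 1) (m : ℕ) :
    a ^ (2 * m + 1) * b ^ (2 * m + 1) =
      b ^ (2 * m) * a ^ (2 * m) - b ^ (2 * m + 1) * a ^ (2 * m + 1) := by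
  have hab : a * b = 1 - b * a := eq_sub_of_add_eq h
  have hb : Commute (b ^ (2 * m)) a := by
    simpa using commute_pow_two_mul_of_mul_add_mul_eq_one ((add_comm _ _).trans h) m 1
  calc a ^ (2 * m + 1) * b ^ (2 * m + 1) = a ^ (2 * m) * (a * b) * b ^ (2 * m) := by
        rw [pow_succ, pow_succ']; noncomm_ring
    _ = a ^ (2 * m) * b ^ (2 * m) - a ^ (2 * m) * b * (b ^ (2 * m) * a) := by
        rw [hab, hb.eq]; noncomm_ring
    _ = b ^ (2 * m) * a ^ (2 * m) - b ^ (2 * m + 1) * a ^ (2 * m + 1) := by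
        rw [pow_two_mul_mul_pow_two_mul_of_mul_add_mul_eq_one h, ← mul_assoc, mul_assoc _ b,
          ← pow_succ', (commute_pow_two_mul_of_mul_add_mul_eq_one h m (2 * m + 1)).eq,
          mul_assoc, ← pow_succ]

end MulAddMulEqOne

theorem statement1_general {A : Type*} [Ring A] (U D : A) (h : D * U + U * D = 1)
    (n : ℕ) :
    (Even n → D ^ n * U ^ n = U ^ n * D ^ n) ∧
    (Odd n → D ^ n * U ^ n = U ^ (n - 1) * D ^ (n - 1) - U ^ n * D ^ n) := by
  refine ⟨?_, ?_⟩
  · rintro ⟨m, rfl⟩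
    rw [← two_mul]
    exact pow_two_mul_mul_pow_two_mul_of_mul_add_mul_eq_one h m
  · rintro ⟨m, rfl⟩
    rw [Nat.add_sub_cancel]
    exact pow_two_mul_add_one_mul_pow_two_mul_add_one_of_mul_add_mul_eq_one h m

/-- Let `A` be an associative unital ring and `U D : A` satisfy
`DU + UD = 1`.  Then for every `n ≥ 1`, `DⁿUⁿ = UⁿDⁿ` if `n` is even and
`DⁿUⁿ = U^(n-1)D^(n-1) - UⁿDⁿ` if `n` is odd. -/
theorem statement1 {A : Type*} [Ring A] (U D : A) (h : D * U + U * D = 1)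
    (n : ℕ) (hn : 1 ≤ n) :
    (Even n → D ^ n * U ^ n = U ^ n * D ^ n) ∧
    (Odd n → D ^ n * U ^ n = U ^ (n - 1) * D ^ (n - 1) - U ^ n * D ^ n) :=
  statement1_general U D h n
end

section
/- If (P,s,v) is a weakly signed differential poset, then for every integer n ≥ 2, ∑_{x ∈ P_n} v(x)·e(x)² = 0. -/
open scoped Classical

namespace SDP

variable {P : Type*} [PartialOrder P] [OrderBot P]

/-- The sign of a saturated chain, recorded as a list: the product of the
edge signs `s` over consecutive pairs. -/
def chainSign {α : Type*} (s : α → α → ℤ) : List α → ℤ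
  | [] => 1
  | [_] => 1
  | x :: y :: rest => s x y * chainSign s (y :: rest)

/-- Maximal chains from `⊥` to `x`: lists whose consecutive entries are covers,
starting at `⊥` and ending at `x`. -/
def chainsTo (x : P) : Set (List P) :=
  {l : List P | l.Chain' (· ⋖ ·) ∧ l.head? = some (⊥ : P) ∧ l.getLast? = some x}

/-- `e(x)`: the signed sum of maximal chains from `⊥` to `x`. -/
noncomputable def e (s : P → P → ℤ) (x : P) : ℤ :=
  ∑ᶠ l ∈ chainsTo x, chainSign s l

variable (K : Type*) [Field K]

/-- The up operator on `K̂P`, written coefficientwise: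
`(U f)(y) = ∑_{x ⋖ y} s(x ⋖ y) f(x)`. -/
noncomputable def Uop (s : P → P → ℤ) (f : P → K) : P → K :=
  fun y => ∑ᶠ x ∈ {x : P | x ⋖ y}, (s x y : K) * f x

/-- The down operator on `K̂P`, written coefficientwise:
`(D f)(x) = ∑_{y ⋗ x} s(x ⋖ y) v(y) v(x) f(y)`. -/
noncomputable def Dop (s : P → P → ℤ) (v : P → ℤ) (f : P → K) : P → K :=
  fun x => ∑ᶠ y ∈ {y : P | x ⋖ y}, (s x y : K) * (v y : K) * (v x : K) * f y

variable [GradeMinOrder ℕ P]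

/-- `(P, s, v)` is a signed poset: edge labels and vertex labels are signs, and
each rank of the graded poset `P` is finite. -/
def IsSignedPoset (s : P → P → ℤ) (v : P → ℤ) : Prop :=
  (∀ x y : P, x ⋖ y → s x y = 1 ∨ s x y = -1) ∧
  (∀ x : P, v x = 1 ∨ v x = -1) ∧
  (∀ n : ℕ, {x : P | grade ℕ x = n}.Finite)

/-- Weakly signed differential: `v(0̂) = 1` and `UD + DU = I` on `K̂P`. -/
def WeaklySignedDifferential (s : P → P → ℤ) (v : P → ℤ) : Prop :=
  v ⊥ = 1 ∧ ∀ f : P → K, Uop K s (Dop K s v f) + Dop K s v (Uop K s f) = f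

/-- α-signed differential: weakly signed differential and `(U + D)𝐏 = 𝐏`. -/
def AlphaSignedDifferential (s : P → P → ℤ) (v : P → ℤ) : Prop :=
  WeaklySignedDifferential K s v ∧
    Uop K s (fun _ => 1) + Dop K s v (fun _ => 1) = (fun _ => (1 : K))

/-- β-signed differential: weakly signed differential and `(D - U)𝐏 = 𝐏`. -/
def BetaSignedDifferential (s : P → P → ℤ) (v : P → ℤ) : Prop :=
  WeaklySignedDifferential K s v ∧
    Dop K s v (fun _ => 1) - Uop K s (fun _ => 1) = (fun _ => (1 : K))

end SDP

set_option linter.unusedSectionVars false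

namespace SDPAux
open SDP

variable {P : Type*} [PartialOrder P] [OrderBot P] [GradeMinOrder ℕ P]

lemma grade_covBy {x y : P} (h : x ⋖ y) : grade ℕ y = grade ℕ x + 1 :=
  ((Order.covBy_iff_add_one_eq).mp (h.grade ℕ)).symm

lemma grade_bot_eq : grade ℕ (⊥ : P) = 0 :=
  Nat.le_zero.mp ((isMin_bot.grade ℕ) (Nat.zero_le _))

lemma eq_bot_of_grade_eq_zero {x : P} (h : grade ℕ x = 0) : x = ⊥ := by
  by_contra hx
  have hlt : (⊥ : P) < x := bot_lt_iff_ne_bot.mpr hx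
  have h2 := grade_strictMono (𝕆 := ℕ) hlt
  omega

variable {s : P → P → ℤ} {v : P → ℤ}

section Fin
variable (hfin : ∀ n : ℕ, {x : P | grade ℕ x = n}.Finite)
include hfin

lemma finite_covers_left (y : P) : {x : P | x ⋖ y}.Finite :=
  (hfin (grade ℕ y - 1)).subset (fun x hx => by
    have := grade_covBy hx
    simp only [Set.mem_setOf_eq]; omega)

lemma finite_covers_right (x : P) : {y : P | x ⋖ y}.Finite :=
  (hfin (grade ℕ x + 1)).subset (fun y hy => by
    have := grade_covBy hy
    simp only [Set.mem_setOf_eq]; omega)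

end Fin

lemma chainsTo_cases {y : P} {l : List P} (hl : l ∈ chainsTo y) :
    (l = [y] ∧ y = (⊥ : P)) ∨
      ∃ x l', x ⋖ y ∧ l' ∈ chainsTo x ∧ l = l' ++ [y] := by
  obtain ⟨hc, hh, hlast⟩ := hl
  rcases List.eq_nil_or_concat' l with rfl | ⟨l', a, rfl⟩
  · simp at hh
  · have ha : a = y := by simpa using hlast
    subst ha
    rcases eq_or_ne l' [] with rfl | hne
    · left
      constructor
      · simp
      · simpa using hh
    · right
      rw [List.Chain', List.isChain_append] at hc
      obtain ⟨hc1, _, hc3⟩ := hc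
      refine ⟨l'.getLast hne, l', ?_, ⟨hc1, ?_, ?_⟩, rfl⟩
      · exact hc3 _ (by rw [List.getLast?_eq_getLast_of_ne_nil hne]; rfl) _ rfl
      · rwa [List.head?_append_of_ne_nil _ hne] at hh
      · exact List.getLast?_eq_getLast_of_ne_nil hne

lemma mem_chainsTo_append {x y : P} {l : List P} (hx : x ⋖ y) (hl : l ∈ chainsTo x) :
    l ++ [y] ∈ chainsTo y := by
  obtain ⟨hc, hh, hlast⟩ := hl
  have hne : l ≠ [] := by rintro rfl; simp at hh
  refine ⟨?_, ?_, ?_⟩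
  · rw [List.Chain', List.isChain_append]
    refine ⟨hc, List.isChain_singleton _, ?_⟩
    intro a ha b hb
    simp only [List.head?_cons, Option.mem_def, Option.some.injEq] at hb
    rw [hlast] at ha
    simp only [Option.mem_def, Option.some.injEq] at ha
    subst ha; subst hb; exact hx
  · rw [List.head?_append_of_ne_nil _ hne]; exact hh
  · simp

lemma chainsTo_subset (y : P) :
    chainsTo y ⊆ insert [y] (⋃ x ∈ {x : P | x ⋖ y}, (· ++ [y]) '' chainsTo x) := by
  intro l hl
  rcases chainsTo_cases hl with ⟨rfl, _⟩ | ⟨x, l', hx, hl', rfl⟩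
  · exact Set.mem_insert _ _
  · exact Set.mem_insert_iff.mpr (Or.inr (Set.mem_biUnion hx ⟨l', hl', rfl⟩))

lemma chainsTo_finite (hfin : ∀ n : ℕ, {x : P | grade ℕ x = n}.Finite) (y : P) :
    (chainsTo y).Finite := by
  have H : ∀ n (y : P), grade ℕ y = n → (chainsTo y).Finite := by
    intro n
    induction n using Nat.strong_induction_on with
    | _ n ih =>
      intro y hy
      refine Set.Finite.subset ?_ (chainsTo_subset y)
      refine Set.Finite.insert _ (Set.Finite.biUnion (finite_covers_left hfin y) ?_)
      intro x hx
      have hgx := grade_covBy hx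
      exact (ih (grade ℕ x) (by omega) x rfl).image _
  exact H _ y rfl

lemma chainSign_append2 (s : P → P → ℤ) :
    ∀ (l : List P) (x y : P),
      chainSign s (l ++ [x, y]) = chainSign s (l ++ [x]) * s x y
  | [], x, y => by simp [chainSign]
  | [a], x, y => by simp [chainSign]
  | a :: b :: t, x, y => by
    have ih := chainSign_append2 s (b :: t) x y
    simp only [List.cons_append] at ih ⊢
    rw [show chainSign s (a :: b :: (t ++ [x, y])) = s a b * chainSign s (b :: (t ++ [x, y]))
        from rfl,
      show chainSign s (a :: b :: (t ++ [x])) = s a b * chainSign s (b :: (t ++ [x])) from rfl,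
      ih]
    ring

lemma chainSign_append (s : P → P → ℤ) (l : List P) (h : l ≠ []) (y : P) :
    chainSign s (l ++ [y]) = chainSign s l * s (l.getLast h) y := by
  rcases List.eq_nil_or_concat' l with rfl | ⟨m, x, rfl⟩
  · exact absurd rfl h
  · rw [List.getLast_append_singleton, List.append_assoc, List.singleton_append]
    exact chainSign_append2 s _ _ _

lemma chainsTo_decomp {y : P} (hy : y ≠ ⊥) :
    chainsTo y = ⋃ x ∈ {x : P | x ⋖ y}, (· ++ [y]) '' chainsTo x := by
  ext l
  constructor
  · intro hl
    rcases chainsTo_cases hl with ⟨rfl, hb⟩ | ⟨x, l', hx, hl', rfl⟩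
    · exact absurd hb hy
    · exact Set.mem_biUnion hx ⟨l', hl', rfl⟩
  · rintro ⟨S, ⟨x, rfl⟩, hS⟩
    simp only [Set.mem_iUnion, Set.mem_image, exists_prop] at hS
    obtain ⟨hx, l', hl', rfl⟩ := hS
    exact mem_chainsTo_append hx hl'

lemma getLast_of_mem_chainsTo {x : P} {l : List P} (hl : l ∈ chainsTo x) (h : l ≠ []) :
    l.getLast h = x := by
  have := hl.2.2
  rw [List.getLast?_eq_getLast_of_ne_nil h] at this
  simpa using this

lemma ne_nil_of_mem_chainsTo {x : P} {l : List P} (hl : l ∈ chainsTo x) : l ≠ [] := by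
  rintro rfl; exact absurd hl.2.1 (by simp)

lemma e_bot : e s (⊥ : P) = 1 := by
  have h : chainsTo (⊥ : P) = {[(⊥ : P)]} := by
    ext l
    constructor
    · intro hl
      rcases chainsTo_cases hl with ⟨rfl, _⟩ | ⟨x, l', hx, _, _⟩
      · rfl
      · exact absurd hx.lt (not_lt_bot)
    · rintro rfl
      exact ⟨List.isChain_singleton _, rfl, rfl⟩
  rw [e, h, finsum_mem_singleton]
  rfl

lemma e_rec (hfin : ∀ n : ℕ, {x : P | grade ℕ x = n}.Finite) {y : P} (hy : y ≠ ⊥) :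
    e s y = ∑ᶠ x ∈ {x : P | x ⋖ y}, s x y * e s x := by
  have hdisj : ({x : P | x ⋖ y}).PairwiseDisjoint (fun x => (· ++ [y]) '' chainsTo x) := by
    intro x1 h1 x2 h2 hne
    simp only [Function.onFun]
    rw [Set.disjoint_left]
    rintro l ⟨l1, hl1, rfl⟩ ⟨l2, hl2, heq⟩
    have : l2 = l1 := by
      have := List.append_left_injective [y] heq
      exact this
    subst this
    exact hne ((getLast_of_mem_chainsTo hl1 (ne_nil_of_mem_chainsTo hl1)).symm.trans
      (getLast_of_mem_chainsTo hl2 (ne_nil_of_mem_chainsTo hl2)))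
  rw [e, chainsTo_decomp hy,
    finsum_mem_biUnion hdisj (finite_covers_left hfin y)
      (fun x _ => (chainsTo_finite hfin x).image _)]
  apply finsum_mem_congr rfl
  intro x hx
  rw [finsum_mem_image (fun l1 _ l2 _ h => List.append_left_injective [y] h)]
  have hcongr : ∀ l ∈ chainsTo x, chainSign s (l ++ [y]) = chainSign s l * s x y := by
    intro l hl
    have hne := ne_nil_of_mem_chainsTo hl
    rw [chainSign_append s l hne y, getLast_of_mem_chainsTo hl hne]
  rw [finsum_mem_congr rfl hcongr,
    finsum_mem_eq_finite_toFinset_sum _ (chainsTo_finite hfin x), e,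
    finsum_mem_eq_finite_toFinset_sum _ (chainsTo_finite hfin x),
    ← Finset.sum_mul]
  ring


section KPart

variable (K : Type*) [Field K]

/-- Iterated up operator applied to the delta function at `⊥`. -/
noncomputable def Un (s : P → P → ℤ) : ℕ → P → K
  | 0 => fun x => if x = ⊥ then 1 else 0
  | (k + 1) => Uop K s (Un s k)

/-- The alternating coefficient sequence. -/
noncomputable def ck : ℕ → K := fun k => if Odd k then 1 else 0

variable {s : P → P → ℤ} {v : P → ℤ}

lemma Uop_apply_finset (hfin : ∀ n : ℕ, {x : P | grade ℕ x = n}.Finite) (f : P → K) (y : P) :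
    Uop K s f y = ∑ x ∈ (finite_covers_left hfin y).toFinset, (s x y : K) * f x := by
  rw [Uop, finsum_mem_eq_finite_toFinset_sum _ (finite_covers_left hfin y)]

lemma Dop_apply_finset (hfin : ∀ n : ℕ, {x : P | grade ℕ x = n}.Finite) (f : P → K) (x : P) :
    Dop K s v f x = ∑ y ∈ (finite_covers_right hfin x).toFinset,
      (s x y : K) * (v y : K) * (v x : K) * f y := by
  rw [Dop, finsum_mem_eq_finite_toFinset_sum _ (finite_covers_right hfin x)]

lemma Uop_zero : Uop K s (fun _ => (0 : K)) = fun _ => (0 : K) := by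
  funext y
  rw [Uop]
  have h : ∀ x ∈ {x : P | x ⋖ y}, (s x y : K) * (0 : K) = 0 := fun x _ => mul_zero _
  rw [finsum_mem_congr rfl h]
  exact finsum_mem_zero _

lemma Uop_const_mul (hfin : ∀ n : ℕ, {x : P | grade ℕ x = n}.Finite) (c : K) (f : P → K) :
    Uop K s (fun x => c * f x) = fun y => c * Uop K s f y := by
  funext y
  rw [Uop_apply_finset K hfin, Uop_apply_finset K hfin, Finset.mul_sum]
  exact Finset.sum_congr rfl fun z _ => by ring

lemma Dop_Un_zero : Dop K s v (Un K s 0) = fun _ => (0 : K) := by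
  funext x
  rw [Dop]
  have h : ∀ y ∈ {y : P | x ⋖ y},
      (s x y : K) * (v y : K) * (v x : K) * Un K s 0 y = 0 := by
    intro y hy
    have hyb : y ≠ ⊥ := by
      rintro rfl
      exact absurd hy.lt not_lt_bot
    simp [Un, hyb]
  rw [finsum_mem_congr rfl h]
  exact finsum_mem_zero _

lemma ck_succ_succ (k : ℕ) : ck K (k + 2) = 1 - ck K (k + 1) := by
  rcases Nat.even_or_odd k with hk | hk <;>
    simp [ck, Nat.odd_add_one, Nat.not_odd_iff_even, hk, Nat.even_add_one,
      Nat.not_even_iff_odd]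

lemma ck_mul_succ (k : ℕ) : ck K (k + 2) * ck K (k + 1) = 0 := by
  rcases Nat.even_or_odd k with hk | hk <;>
    simp [ck, Nat.odd_add_one, Nat.not_odd_iff_even, hk, Nat.even_add_one,
      Nat.not_even_iff_odd]

lemma Dop_Un (hfin : ∀ n : ℕ, {x : P | grade ℕ x = n}.Finite)
    (hwsd : WeaklySignedDifferential K s v) (k : ℕ) :
    Dop K s v (Un K s (k + 1)) = fun x => ck K (k + 1) * Un K s k x := by
  induction k with
  | zero =>
    have h := hwsd.2 (Un K s 0)
    rw [show Un K s (0 + 1) = Uop K s (Un K s 0) from rfl]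
    funext x
    have hx := congrFun h x
    simp only [Pi.add_apply, Dop_Un_zero, Uop_zero] at hx
    have h1 : ck K (0 + 1) = 1 := by simp [ck]
    rw [h1, one_mul]
    simpa using hx
  | succ k ih =>
    have h := hwsd.2 (Un K s (k + 1))
    rw [ih, Uop_const_mul K hfin] at h
    funext x
    have hx := congrFun h x
    simp only [Pi.add_apply] at hx
    rw [show Un K s (k + 1 + 1) = Uop K s (Un K s (k + 1)) from rfl, ck_succ_succ]
    rw [show Un K s (k + 1) = Uop K s (Un K s k) from rfl] at hx ⊢
    linear_combination hx

/-- The bilinear pairing restricted to rank `n`. -/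
noncomputable def Bf (v : P → ℤ) (n : ℕ) (f g : P → K) : K :=
  ∑ᶠ x ∈ {x : P | grade ℕ x = n}, (v x : K) * f x * g x

lemma Bf_eq_sum (hfin : ∀ n : ℕ, {x : P | grade ℕ x = n}.Finite) (n : ℕ) (f g : P → K) :
    Bf K v n f g = ∑ x ∈ (hfin n).toFinset, (v x : K) * f x * g x := by
  rw [Bf, finsum_mem_eq_finite_toFinset_sum _ (hfin n)]

lemma Bf_adj (hfin : ∀ n : ℕ, {x : P | grade ℕ x = n}.Finite)
    (hsv : ∀ x : P, v x = 1 ∨ v x = -1) (n : ℕ) (f g : P → K) :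
    Bf K v (n + 1) (Uop K s f) g = Bf K v n f (Dop K s v g) := by
  have hvsq : ∀ z : P, (v z : K) * (v z : K) = 1 := by
    intro z; rcases hsv z with h | h <;> simp [h]
  rw [Bf_eq_sum K hfin, Bf_eq_sum K hfin]
  have hL : ∀ x ∈ (hfin (n + 1)).toFinset,
      (v x : K) * Uop K s f x * g x =
        ∑ z ∈ (hfin n).toFinset,
          if z ⋖ x then (v x : K) * ((s z x : K) * f z) * g x else 0 := by
    intro x hx
    simp only [Set.Finite.mem_toFinset, Set.mem_setOf_eq] at hx
    rw [Uop_apply_finset K hfin, Finset.mul_sum, Finset.sum_mul]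
    have hsub : (finite_covers_left hfin x).toFinset ⊆ (hfin n).toFinset := by
      intro z hz
      simp only [Set.Finite.mem_toFinset, Set.mem_setOf_eq] at hz ⊢
      have := grade_covBy hz
      omega
    calc ∑ z ∈ (finite_covers_left hfin x).toFinset, (v x : K) * ((s z x : K) * f z) * g x
        = ∑ z ∈ (finite_covers_left hfin x).toFinset,
            (if z ⋖ x then (v x : K) * ((s z x : K) * f z) * g x else 0) :=
          Finset.sum_congr rfl fun z hz => by
            rw [if_pos (by simpa using hz)]
      _ = ∑ z ∈ (hfin n).toFinset,
            (if z ⋖ x then (v x : K) * ((s z x : K) * f z) * g x else 0) :=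
          Finset.sum_subset hsub fun z _ hnz => by
            rw [if_neg (by simpa using hnz)]
  have hR : ∀ z ∈ (hfin n).toFinset,
      (v z : K) * f z * Dop K s v g z =
        ∑ x ∈ (hfin (n + 1)).toFinset,
          if z ⋖ x then (v z : K) * f z * ((s z x : K) * (v x : K) * (v z : K) * g x)
            else 0 := by
    intro z hz
    simp only [Set.Finite.mem_toFinset, Set.mem_setOf_eq] at hz
    rw [Dop_apply_finset K hfin, Finset.mul_sum]
    have hsub : (finite_covers_right hfin z).toFinset ⊆ (hfin (n + 1)).toFinset := by
      intro x hx
      simp only [Set.Finite.mem_toFinset, Set.mem_setOf_eq] at hx ⊢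
      have := grade_covBy hx
      omega
    calc ∑ x ∈ (finite_covers_right hfin z).toFinset,
          (v z : K) * f z * ((s z x : K) * (v x : K) * (v z : K) * g x)
        = ∑ x ∈ (finite_covers_right hfin z).toFinset,
            (if z ⋖ x then (v z : K) * f z * ((s z x : K) * (v x : K) * (v z : K) * g x)
              else 0) :=
          Finset.sum_congr rfl fun x hx => by
            rw [if_pos (by simpa using hx)]
      _ = ∑ x ∈ (hfin (n + 1)).toFinset,
            (if z ⋖ x then (v z : K) * f z * ((s z x : K) * (v x : K) * (v z : K) * g x)
              else 0) :=
          Finset.sum_subset hsub fun x _ hnx => by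
            rw [if_neg (by simpa using hnx)]
  rw [Finset.sum_congr rfl hL, Finset.sum_congr rfl hR, Finset.sum_comm]
  refine Finset.sum_congr rfl fun z _ => Finset.sum_congr rfl fun x _ => ?_
  by_cases h : z ⋖ x
  · rw [if_pos h, if_pos h]
    linear_combination (-(f z * (s z x : K) * (v x : K) * g x)) * hvsq z
  · rw [if_neg h, if_neg h]

lemma Bf_const_mul (hfin : ∀ n : ℕ, {x : P | grade ℕ x = n}.Finite)
    (n : ℕ) (c : K) (f g : P → K) :
    Bf K v n f (fun x => c * g x) = c * Bf K v n f g := by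
  rw [Bf_eq_sum K hfin, Bf_eq_sum K hfin, Finset.mul_sum]
  exact Finset.sum_congr rfl fun z _ => by ring

lemma Un_eq_e (hfin : ∀ n : ℕ, {x : P | grade ℕ x = n}.Finite) :
    ∀ (n : ℕ) (x : P), grade ℕ x = n → Un K s n x = ((e s x : ℤ) : K) := by
  intro n
  induction n with
  | zero =>
    intro x hx
    have hb := eq_bot_of_grade_eq_zero hx
    subst hb
    simp [Un, e_bot]
  | succ n ih =>
    intro x hx
    have hxb : x ≠ ⊥ := by
      rintro rfl
      rw [grade_bot_eq] at hx
      omega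
    rw [show Un K s (n + 1) x = Uop K s (Un K s n) x from rfl, Uop_apply_finset K hfin,
      e_rec hfin hxb, finsum_mem_eq_finite_toFinset_sum _ (finite_covers_left hfin x)]
    push_cast
    refine Finset.sum_congr rfl fun z hz => ?_
    have hz' : z ⋖ x := by simpa using hz
    rw [ih z (by have := grade_covBy hz'; omega)]

lemma S_rec (hfin : ∀ n : ℕ, {x : P | grade ℕ x = n}.Finite)
    (hsv : ∀ x : P, v x = 1 ∨ v x = -1)
    (hwsd : WeaklySignedDifferential K s v) (n : ℕ) :
    Bf K v (n + 1) (Un K s (n + 1)) (Un K s (n + 1)) =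
      ck K (n + 1) * Bf K v n (Un K s n) (Un K s n) := by
  have h1 : Bf K v (n + 1) (Un K s (n + 1)) (Un K s (n + 1)) =
      Bf K v n (Un K s n) (Dop K s v (Un K s (n + 1))) :=
    Bf_adj K hfin hsv n (Un K s n) (Un K s (n + 1))
  rw [h1, Dop_Un K hfin hwsd n, Bf_const_mul K hfin]

end KPart

end SDPAux

/-- If `(P,s,v)` is a weakly signed differential poset, then for
every `n ≥ 2` we have `∑_{x ∈ Pₙ} v(x) e(x)² = 0`. -/
theorem statement2 {P : Type*} [PartialOrder P] [OrderBot P] [GradeMinOrder ℕ P]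
    (K : Type*) [Field K] [CharZero K]
    (s : P → P → ℤ) (v : P → ℤ)
    (hsp : SDP.IsSignedPoset s v)
    (hwsd : SDP.WeaklySignedDifferential K s v)
    (n : ℕ) (hn : 2 ≤ n) :
    (∑ᶠ x ∈ {x : P | grade ℕ x = n}, (v x) * (SDP.e s x) ^ 2) = 0 := by
  classical
  obtain ⟨hsgn, hsv, hfin⟩ := hsp
  obtain ⟨m, rfl⟩ : ∃ m, n = m + 2 := ⟨n - 2, by omega⟩
  have h1 : SDPAux.Bf K v (m + 2) (SDPAux.Un K s (m + 2)) (SDPAux.Un K s (m + 2)) =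
      SDPAux.ck K (m + 2) *
        SDPAux.Bf K v (m + 1) (SDPAux.Un K s (m + 1)) (SDPAux.Un K s (m + 1)) :=
    SDPAux.S_rec K hfin hsv hwsd (m + 1)
  have h2 : SDPAux.Bf K v (m + 1) (SDPAux.Un K s (m + 1)) (SDPAux.Un K s (m + 1)) =
      SDPAux.ck K (m + 1) * SDPAux.Bf K v m (SDPAux.Un K s m) (SDPAux.Un K s m) :=
    SDPAux.S_rec K hfin hsv hwsd m
  have hS : SDPAux.Bf K v (m + 2) (SDPAux.Un K s (m + 2)) (SDPAux.Un K s (m + 2)) = 0 := by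
    rw [h1, h2, ← mul_assoc, SDPAux.ck_mul_succ, zero_mul]
  have hcast : ((∑ᶠ x ∈ {x : P | grade ℕ x = m + 2}, (v x) * (SDP.e s x) ^ 2 : ℤ) : K)
      = SDPAux.Bf K v (m + 2) (SDPAux.Un K s (m + 2)) (SDPAux.Un K s (m + 2)) := by
    rw [finsum_mem_eq_finite_toFinset_sum _ (hfin (m + 2)), SDPAux.Bf_eq_sum K hfin]
    push_cast
    refine Finset.sum_congr rfl fun x hx => ?_
    have hx' : grade ℕ x = m + 2 := by simpa using hx
    rw [SDPAux.Un_eq_e K hfin (m + 2) x hx']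
    ring
  have h0 : ((∑ᶠ x ∈ {x : P | grade ℕ x = m + 2}, (v x) * (SDP.e s x) ^ 2 : ℤ) : K) = 0 :=
    hcast.trans hS
  exact_mod_cast h0
end

section
/- Let (P,s,v) be a weakly signed differential poset. Let w be a finite word in the two letters {U,D}, acting on K̂P by composing the corresponding operators (letters applied right to left), with rank ρ(w) = (number of U's in w) − (number of D's in w). Say that w vanishes if w can be written as a concatenation u·D·v with u, v (possibly empty) words in {U,D} such that ρ(v) is even. If x ∈ P_n with n = ρ(w) ≥ 0, then ⟨w(0̂), x⟩ = 0 if w vanishes, and ⟨w(0̂), x⟩ = e(x) otherwise. -/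
open scoped Classical

namespace SDP

variable {P : Type*} [PartialOrder P] [OrderBot P] (K : Type*) [Field K]

/-- The action of a word in the letters `{U, D}` (`true = U`, `false = D`) on `K̂P`,
letters applied right to left (so the head of the list acts last/outermost). -/
noncomputable def wordAct (s : P → P → ℤ) (v : P → ℤ) : List Bool → (P → K) → (P → K)
  | [], f => f
  | (true :: w), f => Uop K s (wordAct s v w f)
  | (false :: w), f => Dop K s v (wordAct s v w f)

/-- The rank of a word: number of `U`'s minus number of `D`'s. -/
def wordRank (w : List Bool) : ℤ := (w.count true : ℤ) - (w.count false : ℤ)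

/-- A word `w` vanishes if it can be written as `u · D · t` with `ρ(t)` even. -/
def wordVanishes (w : List Bool) : Prop :=
  ∃ u t : List Bool, w = u ++ false :: t ∧ Even (wordRank t)

/-- The basis vector of `K̂P` corresponding to `x ∈ P`. -/
noncomputable def delta (x : P) : P → K := fun p => if p = x then 1 else 0

end SDP


namespace SDP

section Aux

variable {P : Type*} [PartialOrder P] [OrderBot P] (K : Type*) [Field K]
variable (s : P → P → ℤ) (v : P → ℤ)

lemma Uop_zero : Uop K s (0 : P → K) = 0 := by
  funext y
  exact finsum_mem_of_eqOn_zero (fun x _ => by simp)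

lemma Dop_zero : Dop K s v (0 : P → K) = 0 := by
  funext x
  exact finsum_mem_of_eqOn_zero (fun y _ => by simp)

lemma Dop_delta_bot : Dop K s v (delta K (⊥ : P)) = 0 := by
  funext x
  apply finsum_mem_of_eqOn_zero
  intro y hy
  have hyb : y ≠ ⊥ := by
    rintro rfl
    exact absurd hy.lt (not_lt_bot)
  simp [delta, hyb]

/-- Iterated up operator. -/
noncomputable def upow : ℕ → (P → K) → (P → K)
  | 0, f => f
  | (n+1), f => Uop K s (upow n f)

lemma Dop_Uop (hwsd : WeaklySignedDifferential K s v) (f : P → K) :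
    Dop K s v (Uop K s f) = f - Uop K s (Dop K s v f) :=
  eq_sub_of_add_eq' (hwsd.2 f)

lemma Dop_upow (hwsd : WeaklySignedDifferential K s v) :
    ∀ n : ℕ, (Dop K s v (upow K s (2*n) (delta K (⊥ : P))) = 0) ∧
      Dop K s v (upow K s (2*n+1) (delta K (⊥ : P))) = upow K s (2*n) (delta K (⊥ : P)) := by
  intro n
  induction n with
  | zero =>
    constructor
    · simpa [upow] using Dop_delta_bot K s v
    · show Dop K s v (Uop K s (upow K s 0 (delta K (⊥ : P)))) = upow K s 0 (delta K (⊥ : P))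
      rw [Dop_Uop K s v hwsd]
      show upow K s 0 (delta K (⊥:P)) - Uop K s (Dop K s v (delta K (⊥:P))) = _
      rw [Dop_delta_bot, Uop_zero, sub_zero]
  | succ n ih =>
    have key1 : Dop K s v (upow K s (2*(n+1)) (delta K (⊥ : P))) = 0 := by
      have h2 : 2*(n+1) = (2*n+1) + 1 := by ring
      rw [h2]
      show Dop K s v (Uop K s (upow K s (2*n+1) (delta K (⊥:P)))) = 0
      rw [Dop_Uop K s v hwsd, ih.2]
      show upow K s (2*n+1) (delta K (⊥:P)) - Uop K s (upow K s (2*n) (delta K (⊥:P))) = 0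
      have : Uop K s (upow K s (2*n) (delta K (⊥:P))) = upow K s (2*n+1) (delta K (⊥:P)) := rfl
      rw [this, sub_self]
    refine ⟨key1, ?_⟩
    show Dop K s v (Uop K s (upow K s (2*(n+1)) (delta K (⊥:P)))) = _
    rw [Dop_Uop K s v hwsd, key1, Uop_zero, sub_zero]

lemma wordRank_true_cons (w : List Bool) : wordRank (true :: w) = wordRank w + 1 := by
  simp [wordRank, List.count_cons]
  push_cast
  ring

lemma wordRank_false_cons (w : List Bool) : wordRank (false :: w) = wordRank w - 1 := by
  simp [wordRank, List.count_cons]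
  push_cast
  ring

lemma wordVanishes_true_cons (w : List Bool) :
    wordVanishes (true :: w) ↔ wordVanishes w := by
  constructor
  · rintro ⟨u, t, heq, hev⟩
    cases u with
    | nil => simp at heq
    | cons a u =>
      rw [List.cons_append] at heq
      injection heq with _ h2
      exact ⟨u, t, h2, hev⟩
  · rintro ⟨u, t, heq, hev⟩
    exact ⟨true :: u, t, by rw [heq]; rfl, hev⟩

lemma wordVanishes_false_cons (w : List Bool) :
    wordVanishes (false :: w) ↔ (Even (wordRank w) ∨ wordVanishes w) := by
  constructor
  · rintro ⟨u, t, heq, hev⟩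
    cases u with
    | nil =>
      rw [List.nil_append] at heq
      injection heq with _ h2
      subst h2
      exact Or.inl hev
    | cons a u =>
      rw [List.cons_append] at heq
      injection heq with _ h2
      exact Or.inr ⟨u, t, h2, hev⟩
  · rintro (hev | ⟨u, t, heq, hev⟩)
    · exact ⟨[], w, rfl, hev⟩
    · exact ⟨false :: u, t, by rw [heq]; rfl, hev⟩

lemma wordAct_delta (hwsd : WeaklySignedDifferential K s v) :
    ∀ w : List Bool,
      (wordVanishes w → wordAct K s v w (delta K (⊥ : P)) = 0) ∧
      (¬ wordVanishes w → 0 ≤ wordRank w ∧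
        wordAct K s v w (delta K (⊥ : P)) = upow K s (wordRank w).toNat (delta K (⊥ : P))) := by
  intro w
  induction w with
  | nil =>
    constructor
    · rintro ⟨u, t, heq, -⟩
      exact absurd heq (by simp)
    · intro _
      refine ⟨by simp [wordRank], ?_⟩
      simp [wordRank, wordAct, upow]
  | cons b w ih =>
    cases b with
    | true =>
      constructor
      · intro hv
        have hv' := (wordVanishes_true_cons w).mp hv
        show Uop K s (wordAct K s v w (delta K (⊥:P))) = 0
        rw [ih.1 hv', Uop_zero]
      · intro hnv
        have hnv' := fun h => hnv ((wordVanishes_true_cons w).mpr h)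
        obtain ⟨hr, hact⟩ := ih.2 hnv'
        refine ⟨by rw [wordRank_true_cons]; omega, ?_⟩
        show Uop K s (wordAct K s v w (delta K (⊥:P))) = _
        rw [hact]
        have ht : (wordRank (true :: w)).toNat = (wordRank w).toNat + 1 := by
          rw [wordRank_true_cons]; omega
        rw [ht]
        rfl
    | false =>
      by_cases hv' : wordVanishes w
      · have hz : wordAct K s v (false :: w) (delta K (⊥:P)) = 0 := by
          show Dop K s v (wordAct K s v w (delta K (⊥:P))) = 0
          rw [ih.1 hv', Dop_zero]
        constructor
        · intro _; exact hz
        · intro hnv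
          exact absurd ((wordVanishes_false_cons w).mpr (Or.inr hv')) hnv
      · obtain ⟨hr, hact⟩ := ih.2 hv'
        set n := (wordRank w).toNat with hn
        have hwn : wordRank w = (n : ℤ) := by omega
        rcases Nat.even_or_odd n with he | ho
        · obtain ⟨k, hk⟩ := he
          have hk2 : n = 2 * k := by omega
          have hz : wordAct K s v (false :: w) (delta K (⊥:P)) = 0 := by
            show Dop K s v (wordAct K s v w (delta K (⊥:P))) = 0
            rw [hact, hk2]
            exact (Dop_upow K s v hwsd k).1
          constructor
          · intro _; exact hz
          · intro hnv
            refine absurd ((wordVanishes_false_cons w).mpr (Or.inl ?_)) hnv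
            rw [hwn]
            exact Int.even_coe_nat n |>.mpr ⟨k, by omega⟩
        · obtain ⟨k, hk⟩ := ho
          constructor
          · intro hv
            rcases (wordVanishes_false_cons w).mp hv with hev | hvv
            · rw [hwn, Int.even_coe_nat] at hev
              exact absurd hev (by rw [hk]; simp [Nat.even_add_one, parity_simps])
            · exact absurd hvv hv'
          · intro _
            refine ⟨by rw [wordRank_false_cons]; omega, ?_⟩
            show Dop K s v (wordAct K s v w (delta K (⊥:P))) = _
            rw [hact, hk]
            have h21 : 2 * k + 1 = 2*k + 1 := rfl
            rw [(Dop_upow K s v hwsd k).2]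
            have ht : (wordRank (false :: w)).toNat = 2 * k := by
              rw [wordRank_false_cons]; omega
            rw [ht]

end Aux

section Chains

variable {P : Type*} [PartialOrder P] [OrderBot P]

lemma le_getLast_of_chain :
    ∀ (l : List P) (a : P), (a :: l).Chain' (· ⋖ ·) → ∀ b, (a :: l).getLast? = some b → a ≤ b := by
  intro l
  induction l with
  | nil =>
    intro a _ b hb
    simp at hb
    exact hb.le
  | cons c l ih =>
    intro a hc b hb
    have hac : a ⋖ c := (List.isChain_cons_cons.mp hc).1
    have hcl : (c :: l).Chain' (· ⋖ ·) := (List.isChain_cons_cons.mp hc).2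
    have hb' : (c :: l).getLast? = some b := by
      rw [← hb]
      simp [List.getLast?_cons_cons]
    exact le_of_lt (lt_of_lt_of_le hac.lt (ih c hcl b hb'))

lemma chainsTo_bot : chainsTo (⊥ : P) = {[(⊥ : P)]} := by
  ext l
  constructor
  · rintro ⟨hc, hh, hl⟩
    cases l with
    | nil => simp at hh
    | cons a l' =>
      have ha : a = ⊥ := by simpa using hh
      subst ha
      cases l' with
      | nil => rfl
      | cons b l'' =>
        exfalso
        have hab : (⊥ : P) ⋖ b := (List.isChain_cons_cons.mp hc).1
        have hbl : (b :: l'').Chain' (· ⋖ ·) := (List.isChain_cons_cons.mp hc).2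
        have hl' : (b :: l'').getLast? = some (⊥ : P) := by
          rw [← hl]; simp [List.getLast?_cons_cons]
        have := le_getLast_of_chain l'' b hbl ⊥ hl'
        exact absurd (lt_of_lt_of_le hab.lt this) (not_lt_bot)
  · rintro rfl
    exact ⟨List.isChain_singleton _, by simp, by simp⟩

lemma chainsTo_decomp (x : P) (hx : x ≠ ⊥) :
    chainsTo x = ⋃ y ∈ {y : P | y ⋖ x}, (fun l => l ++ [x]) '' chainsTo y := by
  ext l
  constructor
  · rintro ⟨hc, hh, hl⟩
    have hne : l ≠ [] := by rintro rfl; simp at hh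
    have hx' : l.dropLast ++ [x] = l := List.dropLast_append_getLast? x hl
    have hdne : l.dropLast ≠ [] := by
      intro h
      rw [h, List.nil_append] at hx'
      rw [← hx'] at hh
      simp at hh
      exact hx hh
    set m := l.dropLast with hm
    have hml : m.getLast? = some (m.getLast hdne) := List.getLast?_eq_getLast_of_ne_nil hdne
    set y := m.getLast hdne with hy
    rw [← hx'] at hc; unfold List.Chain' at hc; rw [List.isChain_append] at hc
    obtain ⟨hc1, -, hrel⟩ := hc
    have hyx : y ⋖ x := hrel y hml x rfl
    have hmh : m.head? = some (⊥ : P) := by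
      rw [← hx', List.head?_append_of_ne_nil _ hdne] at hh
      exact hh
    exact Set.mem_biUnion hyx ⟨m, ⟨hc1, hmh, hml⟩, hx'⟩
  · intro hl
    obtain ⟨y, hyx, m, ⟨hc, hh, hml⟩, rfl⟩ := by
      simpa [Set.mem_iUnion] using hl
    have hmne : m ≠ [] := by rintro rfl; simp at hh
    refine ⟨?_, ?_, ?_⟩
    · unfold List.Chain'; rw [List.isChain_append]
      refine ⟨hc, List.isChain_singleton x, ?_⟩
      intro a ha b hb
      rw [hml] at ha
      simp at ha hb
      subst_vars
      exact hyx
    · cases m with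
      | nil => exact absurd rfl hmne
      | cons a m' => simpa using hh
    · simp
  
lemma chainSign_concat :
    ∀ (s : P → P → ℤ) (l : List P) (y x : P), l.getLast? = some y →
      chainSign s (l ++ [x]) = chainSign s l * s y x := by
  intro s l
  induction l with
  | nil => intro y x h; simp at h
  | cons a l ih =>
    intro y x h
    cases l with
    | nil =>
      simp at h
      subst h
      show chainSign s [a, x] = chainSign s [a] * s a x
      simp [chainSign]
    | cons b l' =>
      have h' : (b :: l').getLast? = some y := by
        rw [← h]; simp [List.getLast?_cons_cons]
      show chainSign s (a :: ((b :: l') ++ [x])) = chainSign s (a :: b :: l') * s y x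
      have h1 : chainSign s (a :: ((b :: l') ++ [x])) = s a b * chainSign s ((b :: l') ++ [x]) := rfl
      rw [h1, ih y x h']
      have h2 : chainSign s (a :: b :: l') = s a b * chainSign s (b :: l') := rfl
      rw [h2, mul_assoc]

end Chains

section Graded

variable {P : Type*} [PartialOrder P] [OrderBot P] [GradeMinOrder ℕ P]

lemma grade_bot' : grade ℕ (⊥ : P) = 0 := grade_bot

lemma grade_covBy {x y : P} (h : x ⋖ y) : grade ℕ y = grade ℕ x + 1 :=
  (Order.covBy_iff_add_one_eq.mp (CovBy.grade ℕ h)).symm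

lemma eq_bot_of_grade_zero {x : P} (h : grade ℕ x = 0) : x = ⊥ := by
  by_contra hne
  have : (⊥ : P) < x := bot_lt_iff_ne_bot.mpr hne
  have := grade_strictMono (𝕆 := ℕ) this
  rw [grade_bot', h] at this
  exact absurd this (lt_irrefl 0)

lemma chainsTo_finite (hfin : ∀ n : ℕ, {x : P | grade ℕ x = n}.Finite) :
    ∀ (n : ℕ) (x : P), grade ℕ x = n → (chainsTo x).Finite := by
  intro n
  induction n with
  | zero =>
    intro x hx
    rw [eq_bot_of_grade_zero hx, chainsTo_bot]
    exact Set.finite_singleton _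
  | succ n ih =>
    intro x hx
    have hxb : x ≠ ⊥ := by
      intro h; rw [h, grade_bot'] at hx; exact absurd hx.symm (Nat.succ_ne_zero n)
    rw [chainsTo_decomp x hxb]
    apply Set.Finite.biUnion
    · exact (hfin n).subset (fun y hy => by
        have := grade_covBy hy
        simp only [Set.mem_setOf_eq]
        omega)
    · intro y hy
      have hgy : grade ℕ y = n := by have := grade_covBy hy; omega
      exact (ih y hgy).image _

lemma e_bot (s : P → P → ℤ) : e s (⊥ : P) = 1 := by
  rw [e, chainsTo_bot, finsum_mem_singleton]
  rfl

lemma upow_delta (K : Type*) [Field K] (s : P → P → ℤ)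
    (hfin : ∀ n : ℕ, {x : P | grade ℕ x = n}.Finite) :
    ∀ (n : ℕ) (x : P), grade ℕ x = n →
      upow K s n (delta K (⊥ : P)) x = ((e s x : ℤ) : K) := by
  intro n
  induction n with
  | zero =>
    intro x hx
    rw [eq_bot_of_grade_zero hx]
    show delta K (⊥ : P) ⊥ = _
    rw [e_bot]
    simp [delta]
  | succ n ih =>
    intro x hx
    have hxb : x ≠ ⊥ := by
      intro h; rw [h, grade_bot'] at hx; exact absurd hx.symm (Nat.succ_ne_zero n)
    have hcov : ∀ y : P, y ⋖ x → grade ℕ y = n := by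
      intro y hy; have := grade_covBy hy; omega
    have hC : {y : P | y ⋖ x}.Finite :=
      (hfin n).subset (fun y hy => by simp only [Set.mem_setOf_eq]; exact hcov y hy)
    show Uop K s (upow K s n (delta K (⊥:P))) x = _
    rw [Uop]
    rw [finsum_mem_eq_finite_toFinset_sum _ hC]
    have hterm : ∀ y ∈ hC.toFinset,
        (s y x : K) * upow K s n (delta K (⊥:P)) y = ((s y x * e s y : ℤ) : K) := by
      intro y hy
      rw [ih y (hcov y (hC.mem_toFinset.mp hy))]
      push_cast
      ring
    rw [Finset.sum_congr rfl hterm, ← Int.cast_sum]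
    congr 1
    -- now the integer identity
    have hdisj : ({y : P | y ⋖ x}).PairwiseDisjoint
        (fun y => (fun l => l ++ [x]) '' chainsTo y) := by
      intro y1 h1 y2 h2 hne
      simp only [Function.onFun]
      rw [Set.disjoint_left]
      rintro l ⟨m1, hm1, rfl⟩ ⟨m2, hm2, heq⟩
      have hm : m2 = m1 := List.append_cancel_right heq
      subst hm
      exact hne (Option.some_injective _ (hm2.2.2.symm.trans hm1.2.2)).symm
    have hfin' : ∀ y ∈ {y : P | y ⋖ x}, ((fun l => l ++ [x]) '' chainsTo y).Finite := by
      intro y hy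
      exact ((chainsTo_finite hfin n y (hcov y hy)).image _)
    rw [e, chainsTo_decomp x hxb, finsum_mem_biUnion hdisj hC hfin']
    rw [finsum_mem_eq_finite_toFinset_sum _ hC]
    apply Finset.sum_congr rfl
    intro y hy
    have hyx : y ⋖ x := hC.mem_toFinset.mp hy
    have hinj : (chainsTo y).InjOn (fun l => l ++ [x]) := by
      intro a _ b _ h
      exact List.append_cancel_right h
    rw [finsum_mem_image hinj]
    have hfy : (chainsTo y).Finite := chainsTo_finite hfin n y (hcov y hyx)
    rw [finsum_mem_eq_finite_toFinset_sum _ hfy]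
    have : ∀ l ∈ hfy.toFinset, chainSign s (l ++ [x]) = chainSign s l * s y x := by
      intro l hl
      exact chainSign_concat s l y x (hfy.mem_toFinset.mp hl).2.2
    rw [Finset.sum_congr rfl this, ← Finset.sum_mul]
    rw [e, finsum_mem_eq_finite_toFinset_sum _ hfy]
    ring

end Graded

end SDP

/-- in a weakly signed differential poset, for a word `w` in `{U,D}`
and `x ∈ P_n` with `n = ρ(w) ≥ 0`, the coefficient `⟨w(0̂), x⟩` is `0` if `w`
vanishes, and `e(x)` otherwise. -/
theorem statement3 {P : Type*} [PartialOrder P] [OrderBot P] [GradeMinOrder ℕ P]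
    (K : Type*) [Field K] [CharZero K]
    (s : P → P → ℤ) (v : P → ℤ)
    (hsp : SDP.IsSignedPoset s v)
    (hwsd : SDP.WeaklySignedDifferential K s v)
    (w : List Bool) (x : P) (hx : (grade ℕ x : ℤ) = SDP.wordRank w) :
    (SDP.wordVanishes w → SDP.wordAct K s v w (SDP.delta K ⊥) x = 0) ∧
    (¬ SDP.wordVanishes w → SDP.wordAct K s v w (SDP.delta K ⊥) x = (SDP.e s x : K)) := by
  have lemA := SDP.wordAct_delta K s v hwsd w
  constructor
  · intro hv
    rw [lemA.1 hv]
    rfl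
  · intro hnv
    obtain ⟨-, hact⟩ := lemA.2 hnv
    rw [hact]
    have ht : (SDP.wordRank w).toNat = grade ℕ x := by omega
    rw [ht]
    exact SDP.upow_delta K s hsp.2.2 (grade ℕ x) x rfl
end

section
/- Let (P,s,v) be a weakly signed differential poset and for integers n, k ≥ 0 set κ_{n,k} = ∑_{x ∈ P_n} ⟨D^k U^k x, x⟩ (with κ_{n,k} = 0 for n < 0). Then: (i) κ_{n,0} = |P_n| for all n; (ii) κ_{n,1} + κ_{n−1,1} = |P_n| for all n ≥ 0; (iii) κ_{n,k} = 0 for all n ≥ 0 whenever k ≥ 2. Equivalently, writing F(P,t) = ∑_{n≥0} |P_n| t^n and F_k(P,t) = ∑_{n≥0} κ_{n,k} t^n as formal power series, F_0(P,t) = F(P,t), (1+t)·F_1(P,t) = F(P,t), and F_k(P,t) = 0 for k ≥ 2. -/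
open scoped Classical

namespace SDP

variable {P : Type*} [PartialOrder P] [OrderBot P] (K : Type*) [Field K]

variable [GradeMinOrder ℕ P]

/-- `κ_{n,k} = ∑_{x ∈ Pₙ} ⟨Dᵏ Uᵏ x, x⟩` (zero for `n < 0`, since then the
rank set is empty). -/
noncomputable def kappa (s : P → P → ℤ) (v : P → ℤ) (n : ℤ) (k : ℕ) : K :=
  ∑ᶠ x ∈ {x : P | (grade ℕ x : ℤ) = n}, ((Dop K s v)^[k] ((Uop K s)^[k] (delta K x))) x

end SDP

set_option linter.unusedSectionVars false

namespace SDP4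

section Abstract

variable {R : Type*} [Ring R] {K : Type*} [Field K]
variable (t : ℤ → R → K) (D U : R)
variable (hrel : U * D + D * U = 1)
variable (hsub : ∀ (n : ℤ) (A B : R), t n (A - B) = t n A - t n B)
variable (hcomp : ∀ (n : ℤ) (A : R), t n (A * D) = t (n - 1) (D * A))
variable (hneg : ∀ n : ℤ, n < 0 → ∀ A : R, t n A = 0)

include hrel

lemma hDU : D * U = 1 - U * D := eq_sub_of_add_eq' hrel

lemma hDU2p : D * U ^ 2 = U ^ 2 * D := by
  have h := hDU D U hrel
  calc D * U ^ 2 = (D * U) * U := by rw [pow_two, mul_assoc]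
    _ = (1 - U * D) * U := by rw [h]
    _ = U - U * (D * U) := by rw [sub_mul, one_mul, mul_assoc]
    _ = U - U * (1 - U * D) := by rw [h]
    _ = U * (U * D) := by rw [mul_sub, mul_one, sub_sub_cancel]
    _ = U ^ 2 * D := by rw [pow_two, mul_assoc]

lemma heven : ∀ j : ℕ, D * U ^ (2 * j) = U ^ (2 * j) * D := by
  intro j
  induction j with
  | zero => simp
  | succ j ih =>
    have e2 : 2 * (j + 1) = 2 + 2 * j := by ring
    calc D * U ^ (2 * (j + 1)) = D * (U ^ 2 * U ^ (2 * j)) := by rw [e2, pow_add]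
      _ = (D * U ^ 2) * U ^ (2 * j) := (mul_assoc _ _ _).symm
      _ = (U ^ 2 * D) * U ^ (2 * j) := by rw [hDU2p D U hrel]
      _ = U ^ 2 * (D * U ^ (2 * j)) := mul_assoc _ _ _
      _ = U ^ 2 * (U ^ (2 * j) * D) := by rw [ih]
      _ = (U ^ 2 * U ^ (2 * j)) * D := (mul_assoc _ _ _).symm
      _ = U ^ (2 * (j + 1)) * D := by rw [e2, pow_add]

lemma hodd : ∀ j : ℕ, D * U ^ (2 * j + 1) = U ^ (2 * j) - U ^ (2 * j + 1) * D := by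
  intro j
  induction j with
  | zero => simpa using hDU D U hrel
  | succ j ih =>
    have e1 : 2 * (j + 1) + 1 = 2 + (2 * j + 1) := by ring
    have e2 : 2 * (j + 1) = 2 + 2 * j := by ring
    calc D * U ^ (2 * (j + 1) + 1) = D * (U ^ 2 * U ^ (2 * j + 1)) := by rw [e1, pow_add]
      _ = (D * U ^ 2) * U ^ (2 * j + 1) := (mul_assoc _ _ _).symm
      _ = (U ^ 2 * D) * U ^ (2 * j + 1) := by rw [hDU2p D U hrel]
      _ = U ^ 2 * (D * U ^ (2 * j + 1)) := mul_assoc _ _ _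
      _ = U ^ 2 * (U ^ (2 * j) - U ^ (2 * j + 1) * D) := by rw [ih]
      _ = U ^ 2 * U ^ (2 * j) - U ^ 2 * (U ^ (2 * j + 1) * D) := mul_sub _ _ _
      _ = U ^ 2 * U ^ (2 * j) - (U ^ 2 * U ^ (2 * j + 1)) * D := by rw [mul_assoc]
      _ = U ^ (2 * (j + 1)) - U ^ (2 * (j + 1) + 1) * D := by
          rw [← pow_add, ← pow_add, ← e1, ← e2]

include hcomp

lemma abs_even_rec (j : ℕ) (hj : 1 ≤ j) (n : ℤ) :
    t n (D ^ (2 * j) * U ^ (2 * j)) = t (n - 1) (D ^ (2 * j) * U ^ (2 * j)) := by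
  obtain ⟨i, rfl⟩ : ∃ i, j = i + 1 := ⟨j - 1, by omega⟩
  have hk : 2 * (i + 1) = (2 * i + 1) + 1 := by ring
  have h1 : D ^ (2 * (i + 1)) = D ^ (2 * i + 1) * D := by rw [hk, pow_succ]
  have h2 : D * U ^ (2 * (i + 1)) = U ^ (2 * (i + 1)) * D := heven D U hrel (i + 1)
  have hsplit : D ^ (2 * (i + 1)) * U ^ (2 * (i + 1))
      = (D ^ (2 * i + 1) * U ^ (2 * (i + 1))) * D := by
    calc D ^ (2 * (i + 1)) * U ^ (2 * (i + 1))
        = (D ^ (2 * i + 1) * D) * U ^ (2 * (i + 1)) := by rw [h1]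
      _ = D ^ (2 * i + 1) * (D * U ^ (2 * (i + 1))) := mul_assoc _ _ _
      _ = D ^ (2 * i + 1) * (U ^ (2 * (i + 1)) * D) := by rw [h2]
      _ = (D ^ (2 * i + 1) * U ^ (2 * (i + 1))) * D := (mul_assoc _ _ _).symm
  have hmerge : D * (D ^ (2 * i + 1) * U ^ (2 * (i + 1)))
      = D ^ (2 * (i + 1)) * U ^ (2 * (i + 1)) := by
    rw [← mul_assoc, ← pow_succ', ← hk]
  rw [hsplit, hcomp, hmerge, ← hsplit]

lemma abs_even_zero (hneg : ∀ n : ℤ, n < 0 → ∀ A : R, t n A = 0)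
    (j : ℕ) (hj : 1 ≤ j) : ∀ n : ℤ, t n (D ^ (2 * j) * U ^ (2 * j)) = 0 := by
  intro n
  induction n using Int.induction_on with
  | zero =>
    rw [abs_even_rec t D U hrel hcomp j hj 0, hneg (0 - 1) (by norm_num)]
  | succ i ih =>
    rw [abs_even_rec t D U hrel hcomp j hj (i + 1),
      show ((i : ℤ) + 1 - 1 : ℤ) = (i : ℤ) by ring, ih]
  | pred i _ =>
    exact hneg _ (by omega) _

include hsub

lemma abs_odd_rec (j : ℕ) (n : ℤ) :
    t n (D ^ (2 * j + 1) * U ^ (2 * j + 1))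
      = t n (D ^ (2 * j) * U ^ (2 * j))
        - t (n - 1) (D ^ (2 * j + 1) * U ^ (2 * j + 1)) := by
  have h1 : D ^ (2 * j + 1) = D ^ (2 * j) * D := pow_succ _ _
  have hsplit : D ^ (2 * j + 1) * U ^ (2 * j + 1)
      = D ^ (2 * j) * U ^ (2 * j) - (D ^ (2 * j) * U ^ (2 * j + 1)) * D := by
    calc D ^ (2 * j + 1) * U ^ (2 * j + 1)
        = (D ^ (2 * j) * D) * U ^ (2 * j + 1) := by rw [h1]
      _ = D ^ (2 * j) * (D * U ^ (2 * j + 1)) := mul_assoc _ _ _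
      _ = D ^ (2 * j) * (U ^ (2 * j) - U ^ (2 * j + 1) * D) := by rw [hodd D U hrel j]
      _ = D ^ (2 * j) * U ^ (2 * j) - D ^ (2 * j) * (U ^ (2 * j + 1) * D) := mul_sub _ _ _
      _ = D ^ (2 * j) * U ^ (2 * j) - (D ^ (2 * j) * U ^ (2 * j + 1)) * D := by
          rw [mul_assoc]
  have hmerge : D * (D ^ (2 * j) * U ^ (2 * j + 1))
      = D ^ (2 * j + 1) * U ^ (2 * j + 1) := by
    rw [← mul_assoc, ← pow_succ']
  rw [hsplit, hsub, hcomp, hmerge, hsplit]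

lemma abs_odd_zero (hneg : ∀ n : ℤ, n < 0 → ∀ A : R, t n A = 0)
    (j : ℕ) (hj : 1 ≤ j) : ∀ n : ℤ, t n (D ^ (2 * j + 1) * U ^ (2 * j + 1)) = 0 := by
  have hrec : ∀ n : ℤ, t n (D ^ (2 * j + 1) * U ^ (2 * j + 1))
      = - t (n - 1) (D ^ (2 * j + 1) * U ^ (2 * j + 1)) := by
    intro n
    have h := abs_odd_rec t D U hrel hsub hcomp j n
    rw [abs_even_zero t D U hrel hcomp hneg j hj n] at h
    rw [h]; ring
  intro n
  induction n using Int.induction_on with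
  | zero => rw [hrec 0, hneg (0 - 1) (by norm_num)]; ring
  | succ i ih =>
    rw [hrec (i + 1), show ((i : ℤ) + 1 - 1 : ℤ) = (i : ℤ) by ring, ih]; ring
  | pred i _ => exact hneg _ (by omega) _

lemma abs_k1 (n : ℤ) : t n (D * U) = t n 1 - t (n - 1) (D * U) := by
  conv_lhs => rw [hDU D U hrel]
  rw [hsub, hcomp]

end Abstract

variable {P : Type*} [PartialOrder P] [OrderBot P] [GradeMinOrder ℕ P]
variable (K : Type*) [Field K]
variable (s : P → P → ℤ) (v : P → ℤ)

open SDP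

lemma grade_succ {x y : P} (h : x ⋖ y) : grade ℕ y = grade ℕ x + 1 :=
  ((Order.covBy_iff_add_one_eq).mp (h.grade ℕ)).symm

variable (hfin : ∀ n : ℕ, {x : P | grade ℕ x = n}.Finite)

include hfin

lemma finUp (z : P) : {y : P | z ⋖ y}.Finite :=
  (hfin (grade ℕ z + 1)).subset fun _ hy => (grade_succ hy)

lemma finDown (y : P) : {x : P | x ⋖ y}.Finite :=
  (hfin (grade ℕ y - 1)).subset fun x hx => by
    have := grade_succ hx; simp only [Set.mem_setOf_eq]; omega

lemma Uop_apply (f : P → K) (y : P) :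
    Uop K s f y = ∑ x ∈ (finDown hfin y).toFinset, (s x y : K) * f x := by
  rw [Uop]
  exact finsum_mem_eq_finite_toFinset_sum _ (finDown hfin y)

lemma Dop_apply (f : P → K) (x : P) :
    Dop K s v f x
      = ∑ y ∈ (finUp hfin x).toFinset, (s x y : K) * (v y : K) * (v x : K) * f y := by
  rw [Dop]
  exact finsum_mem_eq_finite_toFinset_sum _ (finUp hfin x)

/-- `U` as a linear endomorphism. -/
noncomputable def Ulm : (P → K) →ₗ[K] (P → K) where
  toFun := Uop K s
  map_add' f g := funext fun y => by
    simp only [Uop_apply K s hfin, Pi.add_apply, mul_add, Finset.sum_add_distrib]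
  map_smul' c f := funext fun y => by
    simp only [Uop_apply K s hfin, Pi.smul_apply, smul_eq_mul, RingHom.id_apply,
      Finset.mul_sum]
    exact Finset.sum_congr rfl fun x _ => by ring

/-- `D` as a linear endomorphism. -/
noncomputable def Dlm : (P → K) →ₗ[K] (P → K) where
  toFun := Dop K s v
  map_add' f g := funext fun x => by
    simp only [Dop_apply K s v hfin, Pi.add_apply, mul_add, Finset.sum_add_distrib]
  map_smul' c f := funext fun x => by
    simp only [Dop_apply K s v hfin, Pi.smul_apply, smul_eq_mul, RingHom.id_apply,
      Finset.mul_sum]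
    exact Finset.sum_congr rfl fun y _ => by ring

lemma Ulm_coe : ⇑(Ulm K s hfin) = Uop K s := rfl
lemma Dlm_coe : ⇑(Dlm K s v hfin) = Dop K s v := rfl

/-- The rank set as a set over `ℤ`. -/
lemma finRank (n : ℤ) : {x : P | (grade ℕ x : ℤ) = n}.Finite := by
  rcases le_or_gt 0 n with h | h
  · obtain ⟨m, rfl⟩ := Int.eq_ofNat_of_zero_le h
    exact (hfin m).subset fun x hx => by exact_mod_cast hx
  · convert Set.finite_empty
    ext x; simp only [Set.mem_setOf_eq, Set.mem_empty_iff_false, iff_false]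
    intro hx; omega

/-- trace of an operator on rank `n`. -/
noncomputable def tr (n : ℤ) (A : (P → K) →ₗ[K] (P → K)) : K :=
  ∑ᶠ x ∈ {x : P | (grade ℕ x : ℤ) = n}, A (delta K x) x

lemma tr_eq_sum (n : ℤ) (A : (P → K) →ₗ[K] (P → K)) :
    tr K n A = ∑ x ∈ (finRank hfin n).toFinset, A (delta K x) x := by
  rw [tr]
  exact finsum_mem_eq_finite_toFinset_sum _ (finRank hfin n)

lemma tr_neg_rank {n : ℤ} (hn : n < 0) (A : (P → K) →ₗ[K] (P → K)) :
    tr K n A = 0 := by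
  rw [tr_eq_sum K hfin]
  apply Finset.sum_eq_zero
  intro x hx
  exfalso
  have := (finRank hfin n).mem_toFinset.mp hx
  simp only [Set.mem_setOf_eq] at this
  omega

lemma tr_add (n : ℤ) (A B : (P → K) →ₗ[K] (P → K)) :
    tr K n (A + B) = tr K n A + tr K n B := by
  simp only [tr_eq_sum K hfin, LinearMap.add_apply, Pi.add_apply, Finset.sum_add_distrib]

lemma tr_sub (n : ℤ) (A B : (P → K) →ₗ[K] (P → K)) :
    tr K n (A - B) = tr K n A - tr K n B := by
  simp only [tr_eq_sum K hfin, LinearMap.sub_apply, Pi.sub_apply, Finset.sum_sub_distrib]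

lemma tr_one (n : ℕ) :
    tr (P := P) K (n : ℤ) 1 = ({x : P | grade ℕ x = n}.ncard : K) := by
  have h1 := tr_eq_sum (P := P) K hfin (n : ℤ) (1 : (P → K) →ₗ[K] P → K)
  rw [h1]
  have hset : (finRank hfin (n : ℤ)).toFinset = (hfin n).toFinset := by
    ext x; simp [Set.Finite.mem_toFinset]
  rw [hset]
  have : ∀ x ∈ (hfin n).toFinset, (1 : (P → K) →ₗ[K] (P → K)) (delta K x) x = 1 := by
    intro x _; simp [delta]
  rw [Finset.sum_congr rfl this, Finset.sum_const, nsmul_eq_mul, mul_one,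
    Set.ncard_eq_toFinset_card _ (hfin n)]



-- Expansion of `D` applied to a basis vector.
lemma Dlm_delta (x : P) :
    Dlm K s v hfin (delta K x)
      = ∑ z ∈ (finDown hfin x).toFinset,
          ((s z x : K) * (v x : K) * (v z : K)) • delta K z := by
  funext w
  rw [show (Dlm K s v hfin) (delta K x) w = Dop K s v (delta K x) w from rfl,
    Dop_apply K s v hfin]
  rw [Finset.sum_apply]
  have h1 : ∀ y ∈ (finUp hfin w).toFinset,
      (s w y : K) * (v y : K) * (v w : K) * delta K x y
        = if y = x then (s w x : K) * (v x : K) * (v w : K) else 0 := by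
    intro y _
    by_cases h : y = x
    · subst h; simp [delta]
    · simp [delta, h]
  have h2 : ∀ z ∈ (finDown hfin x).toFinset,
      (((s z x : K) * (v x : K) * (v z : K)) • delta K z) w
        = if w = z then (s z x : K) * (v x : K) * (v z : K) else 0 := by
    intro z _
    by_cases h : w = z
    · subst h; simp [delta]
    · simp [delta, h]
  rw [Finset.sum_congr rfl h1, Finset.sum_congr rfl h2, Finset.sum_ite_eq',
    Finset.sum_ite_eq]
  simp only [Set.Finite.mem_toFinset, Set.mem_setOf_eq]

-- Cyclicity of the trace with respect to `D`.
lemma tr_comp_D (n : ℤ) (A : (P → K) →ₗ[K] (P → K)) :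
    tr K n (A * Dlm K s v hfin) = tr K (n - 1) (Dlm K s v hfin * A) := by
  rw [tr_eq_sum K hfin, tr_eq_sum K hfin]
  have hL : ∀ x ∈ (finRank hfin n).toFinset,
      (A * Dlm K s v hfin) (delta K x) x
        = ∑ z ∈ (finRank hfin (n - 1)).toFinset,
            (if z ⋖ x then (s z x : K) * (v x : K) * (v z : K) * A (delta K z) x
              else 0) := by
    intro x hx
    have hgx : (grade ℕ x : ℤ) = n := (finRank hfin n).mem_toFinset.mp hx
    rw [Module.End.mul_apply, Dlm_delta K s v hfin, map_sum]
    simp only [map_smul, Finset.sum_apply, Pi.smul_apply, smul_eq_mul]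
    have hfilter : Finset.filter (fun z => z ⋖ x) (finRank hfin (n - 1)).toFinset
        = (finDown hfin x).toFinset := by
      ext z
      simp only [Finset.mem_filter, Set.Finite.mem_toFinset, Set.mem_setOf_eq]
      constructor
      · rintro ⟨-, h⟩; exact h
      · intro h
        have := grade_succ h
        exact ⟨by omega, h⟩
    rw [← hfilter, Finset.sum_filter]
  rw [Finset.sum_congr rfl hL, Finset.sum_comm]
  apply Finset.sum_congr rfl
  intro z hz
  have hgz : (grade ℕ z : ℤ) = n - 1 := (finRank hfin (n - 1)).mem_toFinset.mp hz
  rw [Module.End.mul_apply,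
    show (Dlm K s v hfin) (A (delta K z)) z = Dop K s v (A (delta K z)) z from rfl,
    Dop_apply K s v hfin]
  have hfilter : Finset.filter (fun x => z ⋖ x) (finRank hfin n).toFinset
      = (finUp hfin z).toFinset := by
    ext x
    simp only [Finset.mem_filter, Set.Finite.mem_toFinset, Set.mem_setOf_eq]
    constructor
    · rintro ⟨-, h⟩; exact h
    · intro h
      have := grade_succ h
      exact ⟨by omega, h⟩
  rw [← hfilter, Finset.sum_filter]

-- `κ` as a trace.
lemma kappa_eq (n : ℤ) (k : ℕ) :
    SDP.kappa K s v n k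
      = tr K n (Dlm K s v hfin ^ k * Ulm K s hfin ^ k) := by
  rw [SDP.kappa, tr]
  apply finsum_mem_congr rfl
  intro x _
  rw [Module.End.mul_apply, Module.End.pow_apply, Module.End.pow_apply]
  rfl

end SDP4

/-- in a weakly signed differential poset,
(i) `κ_{n,0} = |Pₙ|`; (ii) `κ_{n,1} + κ_{n-1,1} = |Pₙ|`; (iii) `κ_{n,k} = 0` for `k ≥ 2`. -/
theorem statement4 {P : Type*} [PartialOrder P] [OrderBot P] [GradeMinOrder ℕ P]
    (K : Type*) [Field K] [CharZero K]
    (s : P → P → ℤ) (v : P → ℤ)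
    (hsp : SDP.IsSignedPoset s v)
    (hwsd : SDP.WeaklySignedDifferential K s v) :
    (∀ n : ℕ, SDP.kappa K s v (n : ℤ) 0 = ({x : P | grade ℕ x = n}.ncard : K)) ∧
    (∀ n : ℕ, SDP.kappa K s v (n : ℤ) 1 + SDP.kappa K s v ((n : ℤ) - 1) 1
      = ({x : P | grade ℕ x = n}.ncard : K)) ∧
    (∀ n : ℕ, ∀ k : ℕ, 2 ≤ k → SDP.kappa K s v (n : ℤ) k = 0) := by
  obtain ⟨hs1, hv1, hfin⟩ := hsp
  obtain ⟨hvbot, hUD⟩ := hwsd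
  have hrel : SDP4.Ulm K s hfin * SDP4.Dlm K s v hfin
      + SDP4.Dlm K s v hfin * SDP4.Ulm K s hfin = 1 := by
    apply LinearMap.ext
    intro f
    exact hUD f
  have hsub := SDP4.tr_sub (P := P) K hfin
  have hcomp := SDP4.tr_comp_D K s v hfin
  have hneg : ∀ n : ℤ, n < 0 → ∀ A : (P → K) →ₗ[K] (P → K), SDP4.tr K n A = 0 :=
    fun n hn A => SDP4.tr_neg_rank K hfin hn A
  refine ⟨?_, ?_, ?_⟩
  · intro n
    rw [SDP4.kappa_eq K s v hfin, pow_zero, pow_zero, one_mul]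
    exact SDP4.tr_one K hfin n
  · intro n
    have h := SDP4.abs_k1 (SDP4.tr K) (SDP4.Dlm K s v hfin) (SDP4.Ulm K s hfin)
      hrel hsub hcomp (n : ℤ)
    rw [SDP4.kappa_eq K s v hfin (n : ℤ) 1, SDP4.kappa_eq K s v hfin ((n : ℤ) - 1) 1,
      pow_one, pow_one, h, SDP4.tr_one K hfin n]
    ring
  · intro n k hk
    rw [SDP4.kappa_eq K s v hfin]
    rcases Nat.even_or_odd k with he | ho
    · obtain ⟨r, hr⟩ := he
      have hk2 : k = 2 * r := by omega
      have hr1 : 1 ≤ r := by omega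
      rw [hk2]
      exact SDP4.abs_even_zero (SDP4.tr K) (SDP4.Dlm K s v hfin) (SDP4.Ulm K s hfin)
        hrel hcomp hneg r hr1 (n : ℤ)
    · obtain ⟨r, hr⟩ := ho
      have hr1 : 1 ≤ r := by omega
      rw [hr]
      exact SDP4.abs_odd_zero (SDP4.tr K) (SDP4.Dlm K s v hfin) (SDP4.Ulm K s hfin)
        hrel hsub hcomp hneg r hr1 (n : ℤ)
end

section
/- Let (P,s,v) be an α-signed differential poset. Then for every integer k ≥ 0 the following identities hold in K̂P: D^{4k+1}𝐏 = (U^{4k} − U^{4k+1})𝐏; D^{4k+2}𝐏 = −U^{4k+2}𝐏; D^{4k+3}𝐏 = (−U^{4k+2} + U^{4k+3})𝐏; D^{4k+4}𝐏 = U^{4k+4}𝐏. -/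
open scoped Classical

/-!
From `UD + DU = 1` one gets `D U² = U - U D U = U² D`, so `D` commutes with every even power
of `U`. Together with `D𝐏 = 𝐏 - U𝐏` this gives `D²𝐏 = -U²𝐏`, `D³𝐏 = -U²𝐏 + U³𝐏` and
`D⁴𝐏 = U⁴𝐏`; by induction `D^{4k}𝐏 = U^{4k}𝐏`, and `D^{4k+i}𝐏 = U^{4k} D^i 𝐏`.
Since every rank is finite, `U` and `D` are additive, so all of this is ring arithmetic in
`AddMonoid.End (P → K)` acting on `P → K`.
-/

section AnticommutingPair

variable {R M : Type*} [Ring R] [AddCommGroup M] [Module R M] {u d : R} {p : M}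

theorem commute_sq_of_mul_add_mul_eq_one_s5 (h : u * d + d * u = 1) : Commute d (u ^ 2) := by
  have hdu : d * u = 1 - u * d := eq_sub_of_add_eq' h
  calc d * u ^ 2 = (d * u) * u := by noncomm_ring
    _ = (1 - u * d) * u := by rw [hdu]
    _ = u - u * (d * u) := by noncomm_ring
    _ = u - u * (1 - u * d) := by rw [hdu]
    _ = u ^ 2 * d := by noncomm_ring

variable (h : u * d + d * u = 1) (hp : u • p + d • p = p)
include h hp

theorem pow_smul_of_mul_add_mul_eq_one :
    d • p = p - u • p ∧
    d ^ 2 • p = -(u ^ 2 • p) ∧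
    d ^ 3 • p = -(u ^ 2 • p) + u ^ 3 • p ∧
    d ^ 4 • p = u ^ 4 • p := by
  have hd : d • p = p - u • p := eq_sub_of_add_eq' hp
  have hdu (x : M) : d • u • x = x - u • d • x := by
    rw [← mul_smul, eq_sub_of_add_eq' h, sub_smul, one_smul, mul_smul]
  have hdu2 (x : M) : d • u ^ 2 • x = u ^ 2 • d • x := by
    rw [← mul_smul, (commute_sq_of_mul_add_mul_eq_one_s5 h).eq, mul_smul]
  have hd2 : d ^ 2 • p = -(u ^ 2 • p) := by
    rw [sq, mul_smul, hd, smul_sub, hdu, hd, smul_sub, sq, mul_smul]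
    abel
  have hd3 : d ^ 3 • p = -(u ^ 2 • p) + u ^ 3 • p := by
    rw [pow_succ', mul_smul, hd2, smul_neg, hdu2, hd, smul_sub, ← mul_smul, ← pow_succ]
    abel
  refine ⟨hd, hd2, hd3, ?_⟩
  have hc : Commute (d ^ 2) (u ^ 2) := (commute_sq_of_mul_add_mul_eq_one_s5 h).pow_left 2
  rw [show 4 = 2 + 2 from rfl, pow_add, mul_smul, hd2, smul_neg, ← mul_smul, hc.eq, mul_smul,
    hd2, smul_neg, neg_neg, ← mul_smul, ← pow_add]

theorem pow_four_mul_add_smul (k i : ℕ) : d ^ (4 * k + i) • p = u ^ (4 * k) • d ^ i • p := by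
  have hc (a b : ℕ) : Commute (d ^ a) (u ^ (2 * b)) := by
    rw [pow_mul]
    exact (commute_sq_of_mul_add_mul_eq_one_s5 h).pow_pow a b
  have hk : d ^ (4 * k) • p = u ^ (4 * k) • p := by
    induction k with
    | zero => simp
    | succ k ih =>
      rw [mul_add_one, pow_add, mul_smul, (pow_smul_of_mul_add_mul_eq_one h hp).2.2.2,
        ← mul_smul, (hc _ 2).eq, mul_smul, ih, ← mul_smul, ← pow_add, add_comm]
  rw [add_comm, pow_add, mul_smul, hk, ← mul_smul, show 4 * k = 2 * (2 * k) by ring,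
    (hc i _).eq, mul_smul]

theorem pow_four_mul_add_smul_eq (k : ℕ) :
    d ^ (4 * k + 1) • p = u ^ (4 * k) • p - u ^ (4 * k + 1) • p ∧
    d ^ (4 * k + 2) • p = -(u ^ (4 * k + 2) • p) ∧
    d ^ (4 * k + 3) • p = -(u ^ (4 * k + 2) • p) + u ^ (4 * k + 3) • p ∧
    d ^ (4 * k + 4) • p = u ^ (4 * k + 4) • p := by
  obtain ⟨h1, h2, h3, h4⟩ := pow_smul_of_mul_add_mul_eq_one h hp
  simp only [pow_four_mul_add_smul h hp k, pow_one, h1, h2, h3, h4, smul_sub, smul_neg, smul_add,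
    ← mul_smul, ← pow_add, ← pow_succ, and_self]

end AnticommutingPair

namespace SDP

section Operators

variable {P : Type*} [PartialOrder P] (K : Type*) [Field K]

theorem Uop_add (s : P → P → ℤ) (hfin : ∀ y : P, {x | x ⋖ y}.Finite) (f g : P → K) :
    Uop K s (f + g) = Uop K s f + Uop K s g := by
  funext y
  simp only [Uop, Pi.add_apply, mul_add]
  exact finsum_mem_add_distrib (hfin y)

theorem Dop_add (s : P → P → ℤ) (v : P → ℤ) (hfin : ∀ x : P, {y | x ⋖ y}.Finite)
    (f g : P → K) : Dop K s v (f + g) = Dop K s v f + Dop K s v g := by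
  funext x
  simp only [Dop, Pi.add_apply, mul_add]
  exact finsum_mem_add_distrib (hfin x)

noncomputable def Uend (s : P → P → ℤ) (hfin : ∀ y : P, {x | x ⋖ y}.Finite) :
    AddMonoid.End (P → K) :=
  AddMonoidHom.mk' (Uop K s) (Uop_add K s hfin)

noncomputable def Dend (s : P → P → ℤ) (v : P → ℤ) (hfin : ∀ x : P, {y | x ⋖ y}.Finite) :
    AddMonoid.End (P → K) :=
  AddMonoidHom.mk' (Dop K s v) (Dop_add K s v hfin)

end Operators

variable {P : Type*} [PartialOrder P] [GradeMinOrder ℕ P]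
  (hgrade : ∀ n : ℕ, {x : P | grade ℕ x = n}.Finite)
include hgrade

theorem finite_setOf_covBy_left (y : P) : {x | x ⋖ y}.Finite :=
  (hgrade (grade ℕ y - 1)).subset fun x hx => by
    have := Order.covBy_iff_add_one_eq.mp (hx.grade ℕ)
    show grade ℕ x = grade ℕ y - 1
    omega

theorem finite_setOf_covBy_right (x : P) : {y | x ⋖ y}.Finite :=
  (hgrade (grade ℕ x + 1)).subset fun _ hy =>
    (Order.covBy_iff_add_one_eq.mp (hy.grade ℕ)).symm

end SDP

theorem statement5_general {P : Type*} [PartialOrder P] [OrderBot P] [GradeMinOrder ℕ P]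
    (K : Type*) [Field K]
    (s : P → P → ℤ) (v : P → ℤ)
    (hsp : SDP.IsSignedPoset s v)
    (halpha : SDP.AlphaSignedDifferential K s v)
    (k : ℕ) :
    ((SDP.Dop K s v)^[4 * k + 1] (fun _ => 1) =
      (SDP.Uop K s)^[4 * k] (fun _ => 1) - (SDP.Uop K s)^[4 * k + 1] (fun _ => 1)) ∧
    ((SDP.Dop K s v)^[4 * k + 2] (fun _ => 1) =
      - (SDP.Uop K s)^[4 * k + 2] (fun _ => 1)) ∧
    ((SDP.Dop K s v)^[4 * k + 3] (fun _ => 1) =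
      - (SDP.Uop K s)^[4 * k + 2] (fun _ => 1) + (SDP.Uop K s)^[4 * k + 3] (fun _ => 1)) ∧
    ((SDP.Dop K s v)^[4 * k + 4] (fun _ => 1) =
      (SDP.Uop K s)^[4 * k + 4] (fun _ => 1)) := by
  obtain ⟨-, -, hgrade⟩ := hsp
  obtain ⟨⟨-, hUD⟩, hP⟩ := halpha
  let u := SDP.Uend K s (SDP.finite_setOf_covBy_left hgrade)
  let d := SDP.Dend K s v (SDP.finite_setOf_covBy_right hgrade)
  have hud : u * d + d * u = 1 := AddMonoidHom.ext hUD
  exact pow_four_mul_add_smul_eq hud hP k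

/-- in an α-signed differential poset, for every `k ≥ 0`:
`D^{4k+1}𝐏 = (U^{4k} − U^{4k+1})𝐏`, `D^{4k+2}𝐏 = −U^{4k+2}𝐏`,
`D^{4k+3}𝐏 = (−U^{4k+2} + U^{4k+3})𝐏`, `D^{4k+4}𝐏 = U^{4k+4}𝐏`. -/
theorem statement5 {P : Type*} [PartialOrder P] [OrderBot P] [GradeMinOrder ℕ P]
    (K : Type*) [Field K] [CharZero K]
    (s : P → P → ℤ) (v : P → ℤ)
    (hsp : SDP.IsSignedPoset s v)
    (halpha : SDP.AlphaSignedDifferential K s v)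
    (k : ℕ) :
    ((SDP.Dop K s v)^[4 * k + 1] (fun _ => 1) =
      (SDP.Uop K s)^[4 * k] (fun _ => 1) - (SDP.Uop K s)^[4 * k + 1] (fun _ => 1)) ∧
    ((SDP.Dop K s v)^[4 * k + 2] (fun _ => 1) =
      - (SDP.Uop K s)^[4 * k + 2] (fun _ => 1)) ∧
    ((SDP.Dop K s v)^[4 * k + 3] (fun _ => 1) =
      - (SDP.Uop K s)^[4 * k + 2] (fun _ => 1) + (SDP.Uop K s)^[4 * k + 3] (fun _ => 1)) ∧
    ((SDP.Dop K s v)^[4 * k + 4] (fun _ => 1) =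
      (SDP.Uop K s)^[4 * k + 4] (fun _ => 1)) :=
  statement5_general K s v hsp halpha k
end

section
/- Let K be a field of characteristic 0 and let K̂Y be the space of arbitrary (possibly infinite) K-linear combinations of partitions. Define linear operators U and D on K̂Y coefficientwise by U λ = ∑_{ν ⋗ λ} s_α(λ ⋖ ν)·ν and D λ = ∑_{μ ⋖ λ} s_α(μ ⋖ λ)·a'(λ)·a'(μ)·μ. Then UD + DU = I on K̂Y, and (U + D)𝐘 = 𝐘 where 𝐘 = ∑_{λ ∈ Y} λ ∈ K̂Y. That is, Y_α = (Y, s_α, a') is an α-signed differential poset. -/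
open scoped Classical

/-- An integer partition: a weakly decreasing sequence of naturals (rows indexed
from `0`) which is eventually zero. -/
structure YPart where
  part : ℕ → ℕ
  antitone' : Antitone part
  finite' : ∃ N : ℕ, ∀ n : ℕ, N ≤ n → part n = 0

namespace YPart

/-- Containment of Young diagrams. -/
instance : PartialOrder YPart where
  le p q := ∀ i, p.part i ≤ q.part i
  le_refl p i := le_refl _
  le_trans p q r h h' i := (h i).trans (h' i)
  le_antisymm p q h h' := by
    cases p; cases q
    simp only [mk.injEq]
    funext i
    exact le_antisymm (h i) (h' i)

/-- The empty partition is the minimum of Young's lattice. -/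
instance : OrderBot YPart where
  bot := ⟨fun _ => 0, fun _ _ _ => le_refl 0, ⟨0, fun _ _ => rfl⟩⟩
  bot_le p i := Nat.zero_le _

/-- The number of boxes `|λ|`. -/
noncomputable def weight (p : YPart) : ℕ := ∑ᶠ i, p.part i

/-- `a(λ) = (−1)^{λ₂ + λ₄ + λ₆ + ⋯}` (even-numbered rows in 1-based indexing). -/
noncomputable def aSign (p : YPart) : ℤ := (-1) ^ (∑ᶠ i : ℕ, p.part (2 * i + 1))

lemma conjSet_finite (p : YPart) (j : ℕ) : {i : ℕ | j + 1 ≤ p.part i}.Finite := by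
  obtain ⟨N, hN⟩ := p.finite'
  apply Set.Finite.subset (Set.finite_Iio N)
  intro i hi
  simp only [Set.mem_setOf_eq] at hi
  simp only [Set.mem_Iio]
  by_contra h
  push_neg at h
  have := hN i h
  omega

/-- The conjugate partition `λ'`: `λ'_j = #{i : λ_i ≥ j}` (rows indexed from 0). -/
noncomputable def conj (p : YPart) : YPart where
  part j := {i : ℕ | j + 1 ≤ p.part i}.ncard
  antitone' := by
    intro a b hab
    refine Set.ncard_le_ncard ?_ (conjSet_finite p a)
    intro i hi
    simp only [Set.mem_setOf_eq] at hi ⊢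
    omega
  finite' := by
    refine ⟨p.part 0, fun j hj => ?_⟩
    show ({i : ℕ | j + 1 ≤ p.part i}).ncard = 0
    have h : {i : ℕ | j + 1 ≤ p.part i} = ∅ := by
      ext i
      simp only [Set.mem_setOf_eq, Set.mem_empty_iff_false, iff_false, not_le]
      have := p.antitone' (Nat.zero_le i)
      omega
    rw [h]
    simp

/-- `a'(λ) = a(λ')`. -/
noncomputable def aconj (p : YPart) : ℤ := aSign (conj p)

/-- The (0-based) row index of the box added in a cover `p ⋖ q`: the first
index where the two partitions differ. -/
noncomputable def boxRow (p q : YPart) : ℕ := sInf {i : ℕ | p.part i ≠ q.part i}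

/-- `s_α(μ ⋖ λ) = (−1)^{μ₁ + ⋯ + μ_i}` where the added box lies in (1-based) row `i`. -/
noncomputable def salpha (p q : YPart) : ℤ :=
  (-1) ^ (∑ j ∈ Finset.range (boxRow p q + 1), p.part j)

/-- `s_β(μ ⋖ λ) = a(λ) a(μ) s_α(μ ⋖ λ)`. -/
noncomputable def sbeta (p q : YPart) : ℤ := aSign q * aSign p * salpha p q

end YPart

set_option linter.unusedVariables false

namespace YPart

lemma ext' {p q : YPart} (h : ∀ i, p.part i = q.part i) : p = q := by
  cases p; cases q
  simp only [mk.injEq]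
  funext i
  exact h i

lemma le_def {p q : YPart} : p ≤ q ↔ ∀ i, p.part i ≤ q.part i := Iff.rfl

/-- A box can be added in row `i`. -/
def Addable (p : YPart) (i : ℕ) : Prop := i = 0 ∨ p.part i < p.part (i - 1)

/-- A box can be removed in row `i`. -/
def Removable (p : YPart) (i : ℕ) : Prop := p.part (i + 1) < p.part i

/-- Add a box in row `i` (junk value `p` if not addable). -/
noncomputable def grow (p : YPart) (i : ℕ) : YPart :=
  if h : Addable p i then
    { part := fun j => if j = i then p.part i + 1 else p.part j
      antitone' := by
        intro a b hab
        have hpab := p.antitone' hab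
        have F1 : ∀ c, c < i → p.part i < p.part c := by
          intro c hc
          rcases h with h0 | hlt
          · omega
          · exact lt_of_lt_of_le hlt (p.antitone' (by omega))
        dsimp only
        split_ifs with hb ha ha
        · exact le_rfl
        · have := F1 a (by omega); omega
        · rw [← ha]; omega
        · exact hpab
      finite' := by
        obtain ⟨N, hN⟩ := p.finite'
        refine ⟨max N (i + 1), fun n hn => ?_⟩
        have hni : n ≠ i := by omega
        simp only [if_neg hni]
        exact hN n (by omega) }
  else p

/-- Remove a box in row `i` (junk value `p` if not removable). -/
noncomputable def shrink (p : YPart) (i : ℕ) : YPart :=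
  if h : Removable p i then
    { part := fun j => if j = i then p.part i - 1 else p.part j
      antitone' := by
        intro a b hab
        have hpab := p.antitone' hab
        unfold Removable at h
        have F2 : ∀ c, i < c → p.part c < p.part i := by
          intro c hc
          exact lt_of_le_of_lt (p.antitone' (show i + 1 ≤ c by omega)) h
        dsimp only
        split_ifs with hb ha ha
        · exact le_rfl
        · rw [← hb]; omega
        · have := F2 b (by omega); omega
        · exact hpab
      finite' := by
        obtain ⟨N, hN⟩ := p.finite'
        refine ⟨max N (i + 1), fun n hn => ?_⟩
        have hni : n ≠ i := by omega
        simp only [if_neg hni]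
        exact hN n (by omega) }
  else p

lemma grow_part {p : YPart} {i : ℕ} (h : Addable p i) (j : ℕ) :
    (grow p i).part j = if j = i then p.part i + 1 else p.part j := by
  rw [grow, dif_pos h]

lemma shrink_part {p : YPart} {i : ℕ} (h : Removable p i) (j : ℕ) :
    (shrink p i).part j = if j = i then p.part i - 1 else p.part j := by
  rw [shrink, dif_pos h]

lemma grow_part_self {p : YPart} {i : ℕ} (h : Addable p i) :
    (grow p i).part i = p.part i + 1 := by rw [grow_part h, if_pos rfl]

lemma grow_part_ne {p : YPart} {i : ℕ} (h : Addable p i) {j : ℕ} (hj : j ≠ i) :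
    (grow p i).part j = p.part j := by rw [grow_part h, if_neg hj]

lemma shrink_part_self {p : YPart} {i : ℕ} (h : Removable p i) :
    (shrink p i).part i = p.part i - 1 := by rw [shrink_part h, if_pos rfl]

lemma shrink_part_ne {p : YPart} {i : ℕ} (h : Removable p i) {j : ℕ} (hj : j ≠ i) :
    (shrink p i).part j = p.part j := by rw [shrink_part h, if_neg hj]

lemma removable_pos {p : YPart} {i : ℕ} (h : Removable p i) : 0 < p.part i := by
  unfold Removable at h; omega

lemma removable_grow {p : YPart} {i : ℕ} (h : Addable p i) : Removable (grow p i) i := by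
  unfold Removable
  rw [grow_part_self h, grow_part_ne h (show i + 1 ≠ i by omega)]
  have := p.antitone' (show i ≤ i + 1 by omega)
  omega

lemma addable_shrink {p : YPart} {i : ℕ} (h : Removable p i) : Addable (shrink p i) i := by
  rcases Nat.eq_zero_or_pos i with rfl | hi
  · exact Or.inl rfl
  · refine Or.inr ?_
    rw [shrink_part_self h, shrink_part_ne h (show i - 1 ≠ i by omega)]
    have h1 := p.antitone' (show i - 1 ≤ i by omega)
    have h2 := removable_pos h
    omega

lemma shrink_grow {p : YPart} {i : ℕ} (h : Addable p i) : shrink (grow p i) i = p := by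
  apply ext'
  intro k
  rcases eq_or_ne k i with rfl | hk
  · rw [shrink_part_self (removable_grow h), grow_part_self h]
    omega
  · rw [shrink_part_ne (removable_grow h) hk, grow_part_ne h hk]

lemma grow_shrink {p : YPart} {i : ℕ} (h : Removable p i) : grow (shrink p i) i = p := by
  apply ext'
  intro k
  rcases eq_or_ne k i with rfl | hk
  · rw [grow_part_self (addable_shrink h), shrink_part_self h]
    have := removable_pos h
    omega
  · rw [grow_part_ne (addable_shrink h) hk, shrink_part_ne h hk]

lemma lt_grow {p : YPart} {i : ℕ} (h : Addable p i) : p < grow p i := by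
  rw [lt_iff_le_and_ne]
  constructor
  · intro k
    rcases eq_or_ne k i with rfl | hk
    · rw [grow_part_self h]; omega
    · rw [grow_part_ne h hk]
  · intro hpq
    have := congrArg (fun q => q.part i) hpq
    rw [grow_part_self h] at this
    omega

lemma covby_grow {p : YPart} {i : ℕ} (h : Addable p i) : p ⋖ grow p i := by
  refine ⟨lt_grow h, fun s hps hsq => ?_⟩
  have h1 : ∀ j, p.part j ≤ s.part j := hps.le
  have h2 : ∀ j, s.part j ≤ (grow p i).part j := hsq.le
  rcases eq_or_ne (s.part i) (p.part i) with hsi | hsi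
  · apply absurd hps
    simp only [lt_iff_le_and_ne, not_and_or, not_not]
    right
    apply (ext' ?_).symm
    intro k
    rcases eq_or_ne k i with rfl | hk
    · exact hsi
    · have h3 := h2 k
      rw [grow_part_ne h hk] at h3
      exact le_antisymm h3 (h1 k)
  · apply absurd hsq
    simp only [lt_iff_le_and_ne, not_and_or, not_not]
    right
    apply ext'
    intro k
    rcases eq_or_ne k i with rfl | hk
    · have h3 := h2 k
      rw [grow_part_self h] at h3
      have h4 := h1 k
      rw [grow_part_self h]
      omega
    · have h3 := h2 k
      rw [grow_part_ne h hk] at h3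
      rw [grow_part_ne h hk]
      exact le_antisymm h3 (h1 k)

end YPart
namespace YPart

lemma shrink_lt {q : YPart} {i : ℕ} (h : Removable q i) : shrink q i < q := by
  rw [lt_iff_le_and_ne]
  constructor
  · intro k
    rcases eq_or_ne k i with rfl | hk
    · rw [shrink_part_self h]; omega
    · rw [shrink_part_ne h hk]
  · intro hpq
    have := congrArg (fun r => r.part i) hpq
    rw [shrink_part_self h] at this
    have := removable_pos h
    omega

lemma covby_iff {p q : YPart} : p ⋖ q ↔ ∃ i, Addable p i ∧ q = grow p i := by
  constructor
  · intro hc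
    have hlt := hc.1
    have hle : ∀ j, p.part j ≤ q.part j := hlt.le
    have hne : p ≠ q := hlt.ne
    have hex : ∃ j, p.part j < q.part j := by
      by_contra hno
      push_neg at hno
      exact hne (ext' fun j => le_antisymm (hle j) (hno j))
    obtain ⟨Np, hNp⟩ := p.finite'
    obtain ⟨Nq, hNq⟩ := q.finite'
    set M := max Np Nq with hM
    set i := Nat.findGreatest (fun j => p.part j < q.part j) M with hi
    obtain ⟨j0, hj0⟩ := hex
    have hj0M : j0 ≤ M := by
      by_contra hco
      push_neg at hco
      rw [hNp j0 (by omega), hNq j0 (by omega)] at hj0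
      omega
    have hPi : p.part i < q.part i :=
      Nat.findGreatest_spec (P := fun j => p.part j < q.part j) hj0M hj0
    have hgt : ∀ j, i < j → p.part j = q.part j := by
      intro j hj
      rcases le_or_gt j M with hjM | hjM
      · have := Nat.findGreatest_is_greatest hj hjM
        simp only [not_lt] at this
        exact le_antisymm (hle j) this
      · rw [hNp j (by omega), hNq j (by omega)]
    have hrem : Removable q i := by
      have h1 := hgt (i + 1) (by omega)
      have h2 := p.antitone' (show i ≤ i + 1 by omega)
      unfold Removable
      omega
    have hple : p ≤ shrink q i := by
      intro k
      rcases eq_or_ne k i with rfl | hk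
      · rw [shrink_part_self hrem]; omega
      · rw [shrink_part_ne hrem hk]; exact hle k
    have hps : p = shrink q i := by
      rcases eq_or_lt_of_le hple with heq2 | hlt3
      · exact heq2
      · exact absurd (shrink_lt hrem) (hc.2 hlt3)
    refine ⟨i, ?_, ?_⟩
    · rw [hps]; exact addable_shrink hrem
    · rw [hps, grow_shrink hrem]
  · rintro ⟨i, hi, rfl⟩
    exact covby_grow hi

lemma covby_iff' {p q : YPart} : p ⋖ q ↔ ∃ i, Removable q i ∧ p = shrink q i := by
  rw [covby_iff]
  constructor
  · rintro ⟨i, hi, rfl⟩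
    exact ⟨i, removable_grow hi, (shrink_grow hi).symm⟩
  · rintro ⟨i, hi, rfl⟩
    exact ⟨i, addable_shrink hi, (grow_shrink hi).symm⟩

lemma addable_finite (p : YPart) : {i : ℕ | Addable p i}.Finite := by
  obtain ⟨N, hN⟩ := p.finite'
  apply Set.Finite.subset (Set.finite_Iio (N + 1))
  intro i hi
  simp only [Set.mem_setOf_eq] at hi
  simp only [Set.mem_Iio]
  by_contra hco
  push_neg at hco
  rcases hi with rfl | hlt
  · omega
  · rw [hN (i - 1) (by omega)] at hlt
    omega

lemma removable_finite (p : YPart) : {i : ℕ | Removable p i}.Finite := by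
  obtain ⟨N, hN⟩ := p.finite'
  apply Set.Finite.subset (Set.finite_Iio N)
  intro i hi
  simp only [Set.mem_setOf_eq] at hi
  simp only [Set.mem_Iio]
  by_contra hco
  push_neg at hco
  unfold Removable at hi
  rw [hN i (by omega)] at hi
  omega

noncomputable def addFinset (p : YPart) : Finset ℕ := (addable_finite p).toFinset

noncomputable def remFinset (p : YPart) : Finset ℕ := (removable_finite p).toFinset

@[simp] lemma mem_addFinset {p : YPart} {i : ℕ} : i ∈ addFinset p ↔ Addable p i :=
  Set.Finite.mem_toFinset _

@[simp] lemma mem_remFinset {p : YPart} {i : ℕ} : i ∈ remFinset p ↔ Removable p i :=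
  Set.Finite.mem_toFinset _

lemma coversAbove (y : YPart) :
    {x : YPart | y ⋖ x} = ↑((addFinset y).image (grow y)) := by
  ext x
  simp only [Set.mem_setOf_eq, Finset.coe_image, Set.mem_image, Finset.mem_coe,
    mem_addFinset, covby_iff]
  constructor
  · rintro ⟨i, hi, rfl⟩; exact ⟨i, hi, rfl⟩
  · rintro ⟨i, hi, rfl⟩; exact ⟨i, hi, rfl⟩

lemma coversBelow (y : YPart) :
    {x : YPart | x ⋖ y} = ↑((remFinset y).image (shrink y)) := by
  ext x
  simp only [Set.mem_setOf_eq, Finset.coe_image, Set.mem_image, Finset.mem_coe,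
    mem_remFinset, covby_iff']
  constructor
  · rintro ⟨i, hi, rfl⟩; exact ⟨i, hi, rfl⟩
  · rintro ⟨i, hi, rfl⟩; exact ⟨i, hi, rfl⟩

lemma grow_injOn {p : YPart} {i j : ℕ} (hi : Addable p i) (hj : Addable p j)
    (h : grow p i = grow p j) : i = j := by
  by_contra hne
  have h1 := congrArg (fun r => r.part i) h
  rw [grow_part_self hi, grow_part_ne hj (Ne.symm ?_)] at h1
  · omega
  · exact fun hc => hne hc.symm

lemma shrink_injOn {p : YPart} {i j : ℕ} (hi : Removable p i) (hj : Removable p j)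
    (h : shrink p i = shrink p j) : i = j := by
  by_contra hne
  have h1 := congrArg (fun r => r.part i) h
  rw [shrink_part_self hi, shrink_part_ne hj (Ne.symm ?_)] at h1
  · have := removable_pos hi; omega
  · exact fun hc => hne hc.symm

end YPart
namespace YPart

/-- Partial sum of the first `n` rows. -/
noncomputable def Ssum (p : YPart) (n : ℕ) : ℕ := ∑ j ∈ Finset.range n, p.part j

lemma boxRow_grow {p : YPart} {i : ℕ} (h : Addable p i) : boxRow p (grow p i) = i := by
  unfold boxRow
  have hset : {j : ℕ | p.part j ≠ (grow p i).part j} = {i} := by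
    ext j
    simp only [Set.mem_setOf_eq, Set.mem_singleton_iff]
    constructor
    · intro hj
      by_contra hne
      exact hj (grow_part_ne h hne).symm
    · rintro rfl
      rw [grow_part_self h]
      omega
  rw [hset, csInf_singleton]

lemma boxRow_shrink {q : YPart} {i : ℕ} (h : Removable q i) : boxRow (shrink q i) q = i := by
  unfold boxRow
  have hpos := removable_pos h
  have hset : {j : ℕ | (shrink q i).part j ≠ q.part j} = {i} := by
    ext j
    simp only [Set.mem_setOf_eq, Set.mem_singleton_iff]
    constructor
    · intro hj
      by_contra hne
      exact hj (shrink_part_ne h hne)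
    · rintro rfl
      rw [shrink_part_self h]
      omega
  rw [hset, csInf_singleton]

lemma salpha_grow {p : YPart} {i : ℕ} (h : Addable p i) :
    salpha p (grow p i) = (-1 : ℤ) ^ (Ssum p (i + 1)) := by
  unfold salpha
  rw [boxRow_grow h]
  rfl

lemma salpha_shrink {q : YPart} {i : ℕ} (h : Removable q i) :
    salpha (shrink q i) q = -(-1 : ℤ) ^ (Ssum q (i + 1)) := by
  unfold salpha
  rw [boxRow_shrink h]
  have hE : Ssum q (i + 1) = (∑ j ∈ Finset.range (i + 1), (shrink q i).part j) + 1 := by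
    unfold Ssum
    rw [Finset.sum_range_succ, Finset.sum_range_succ]
    have h1 : ∑ j ∈ Finset.range i, (shrink q i).part j = ∑ j ∈ Finset.range i, q.part j :=
      Finset.sum_congr rfl fun j hj =>
        shrink_part_ne h (by simp only [Finset.mem_range] at hj; omega)
    rw [h1, shrink_part_self h]
    have := removable_pos h
    omega
  rw [hE, pow_succ]
  ring

lemma Ssum_grow {p : YPart} {a : ℕ} (h : Addable p a) (n : ℕ) :
    Ssum (grow p a) n = Ssum p n + (if a < n then 1 else 0) := by
  unfold Ssum
  have hcg : ∀ j ∈ Finset.range n, (grow p a).part j = p.part j + (if j = a then 1 else 0) := by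
    intro j hj
    rw [grow_part h]
    by_cases hja : j = a
    · subst hja; simp
    · simp [hja]
  rw [Finset.sum_congr rfl hcg, Finset.sum_add_distrib,
    Finset.sum_ite_eq' (Finset.range n) a (fun _ => 1)]
  simp [Finset.mem_range]

lemma Ssum_shrink {p : YPart} {r : ℕ} (h : Removable p r) (n : ℕ) :
    Ssum (shrink p r) n + (if r < n then 1 else 0) = Ssum p n := by
  unfold Ssum
  have hpos := removable_pos h
  have hcg : ∀ j ∈ Finset.range n, (shrink p r).part j + (if j = r then 1 else 0) = p.part j := by
    intro j hj
    rw [shrink_part h]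
    by_cases hjr : j = r
    · subst hjr; simp; omega
    · simp [hjr]
  rw [← Finset.sum_congr rfl hcg, Finset.sum_add_distrib,
    Finset.sum_ite_eq' (Finset.range n) r (fun _ => 1)]
  simp [Finset.mem_range]

lemma aSign_eq (p : YPart) {N : ℕ} (h : ∀ n, N ≤ n → p.part n = 0) :
    aSign p = (-1 : ℤ) ^ (∑ k ∈ Finset.range N, p.part (2 * k + 1)) := by
  unfold aSign
  congr 1
  apply finsum_eq_sum_of_support_subset
  intro k hk
  simp only [Function.mem_support] at hk
  simp only [Finset.coe_range, Set.mem_Iio]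
  by_contra hco
  push_neg at hco
  exact hk (h _ (by omega))

lemma conj_part_eq_zero {p : YPart} {j : ℕ} (h : p.part 0 ≤ j) : (conj p).part j = 0 := by
  show ({i : ℕ | j + 1 ≤ p.part i}).ncard = 0
  have hset : {i : ℕ | j + 1 ≤ p.part i} = ∅ := by
    ext i
    simp only [Set.mem_setOf_eq, Set.mem_empty_iff_false, iff_false, not_le]
    have := p.antitone' (Nat.zero_le i)
    omega
  rw [hset]
  simp

lemma conj_grow_part {p : YPart} {a : ℕ} (h : Addable p a) (j : ℕ) :
    (conj (grow p a)).part j = (conj p).part j + (if j = p.part a then 1 else 0) := by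
  by_cases hj : j = p.part a
  · rw [if_pos hj]
    show ({i : ℕ | j + 1 ≤ (grow p a).part i}).ncard = ({i : ℕ | j + 1 ≤ p.part i}).ncard + 1
    have hset : {i : ℕ | j + 1 ≤ (grow p a).part i} = insert a {i : ℕ | j + 1 ≤ p.part i} := by
      ext i
      simp only [Set.mem_setOf_eq, Set.mem_insert_iff]
      rcases eq_or_ne i a with rfl | hne
      · rw [grow_part_self h]
        constructor
        · intro _; exact Or.inl rfl
        · intro _; omega
      · rw [grow_part_ne h hne]
        constructor
        · intro hle; exact Or.inr hle
        · rintro (rfl | hle)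
          · exact absurd rfl hne
          · exact hle
    have hna : a ∉ {i : ℕ | j + 1 ≤ p.part i} := by
      simp only [Set.mem_setOf_eq]
      omega
    rw [hset, Set.ncard_insert_of_notMem hna (conjSet_finite p j)]
  · rw [if_neg hj, add_zero]
    show ({i : ℕ | j + 1 ≤ (grow p a).part i}).ncard = ({i : ℕ | j + 1 ≤ p.part i}).ncard
    congr 1
    ext i
    simp only [Set.mem_setOf_eq]
    rcases eq_or_ne i a with rfl | hne
    · rw [grow_part_self h]
      omega
    · rw [grow_part_ne h hne]

lemma aconj_grow_mul {p : YPart} {a : ℕ} (h : Addable p a) :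
    aconj (grow p a) * aconj p = (-1 : ℤ) ^ (p.part a) := by
  set c := p.part a with hc
  set N := p.part 0 + c + 2 with hN
  have h1 : ∀ n, N ≤ n → (conj p).part n = 0 := fun n hn => conj_part_eq_zero (by omega)
  have h2 : ∀ n, N ≤ n → (conj (grow p a)).part n = 0 := by
    intro n hn
    apply conj_part_eq_zero
    have hg : (grow p a).part 0 ≤ p.part 0 + 1 := by
      rw [grow_part h]
      split_ifs with h0
      · subst h0; omega
      · omega
    omega
  rw [aconj, aconj, aSign_eq _ h2, aSign_eq _ h1, ← pow_add]
  have hcongr : ∀ k ∈ Finset.range N,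
      (conj (grow p a)).part (2 * k + 1) = (conj p).part (2 * k + 1)
        + (if 2 * k + 1 = c then 1 else 0) := fun k _ => conj_grow_part h _
  rw [Finset.sum_congr rfl hcongr, Finset.sum_add_distrib]
  set B := ∑ k ∈ Finset.range N, (conj p).part (2 * k + 1) with hB
  rcases Nat.even_or_odd c with he | ho
  · obtain ⟨m, hm⟩ := he
    have hz : ∀ k ∈ Finset.range N, (if 2 * k + 1 = c then 1 else 0) = 0 := by
      intro k _
      rw [if_neg]
      omega
    rw [Finset.sum_congr rfl hz, Finset.sum_const_zero, add_zero]
    rw [show B + B = 2 * B by ring, pow_mul]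
    norm_num
    exact (Even.neg_one_pow ⟨m, by omega⟩).symm
  · obtain ⟨m, hm⟩ := ho
    have hz : ∀ k ∈ Finset.range N, (if 2 * k + 1 = c then 1 else 0)
        = (if k = m then 1 else 0) := by
      intro k _
      congr 1
      simp only [eq_iff_iff]
      constructor <;> intro <;> omega
    rw [Finset.sum_congr rfl hz, Finset.sum_ite_eq' (Finset.range N) m (fun _ => 1)]
    rw [if_pos (Finset.mem_range.mpr (by omega))]
    rw [show B + 1 + B = 2 * B + 1 by ring, pow_add, pow_mul]
    norm_num
    exact (Odd.neg_one_pow ⟨m, by omega⟩).symm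

lemma Dcoef {p : YPart} {a : ℕ} (h : Addable p a) :
    salpha p (grow p a) * (aconj (grow p a) * aconj p) = (-1 : ℤ) ^ (Ssum p a) := by
  rw [salpha_grow h, aconj_grow_mul h, ← pow_add]
  have hE : Ssum p (a + 1) + p.part a = Ssum p a + 2 * p.part a := by
    unfold Ssum
    rw [Finset.sum_range_succ]
    ring
  rw [hE, pow_add, pow_mul, neg_one_sq, one_pow, mul_one]

end YPart
namespace YPart

lemma pow_cancel (m c : ℕ) : (-1 : ℤ) ^ (m + c) * (-1) ^ m = (-1) ^ c := by
  rw [pow_add]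
  have hsq : (-1 : ℤ) ^ m * (-1) ^ m = 1 := by
    rw [← pow_add, ← two_mul, pow_mul, neg_one_sq, one_pow]
  linear_combination ((-1 : ℤ) ^ c) * hsq

lemma Uop_eq {K : Type*} [Field K] (f : YPart → K) (y : YPart) :
    SDP.Uop K YPart.salpha f y
      = ∑ r ∈ remFinset y, ((salpha (shrink y r) y : ℤ) : K) * f (shrink y r) := by
  show (∑ᶠ x ∈ {x : YPart | x ⋖ y}, ((salpha x y : ℤ) : K) * f x) = _
  rw [coversBelow, finsum_mem_coe_finset]
  exact Finset.sum_image fun r hr r' hr' heq =>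
    shrink_injOn (mem_remFinset.mp hr) (mem_remFinset.mp hr') heq

lemma Dop_eq {K : Type*} [Field K] (f : YPart → K) (x : YPart) :
    SDP.Dop K YPart.salpha YPart.aconj f x
      = ∑ a ∈ addFinset x,
          ((salpha x (grow x a) * (aconj (grow x a) * aconj x) : ℤ) : K) * f (grow x a) := by
  show (∑ᶠ y ∈ {y : YPart | x ⋖ y},
      ((salpha x y : ℤ) : K) * ((aconj y : ℤ) : K) * ((aconj x : ℤ) : K) * f y) = _
  rw [coversAbove, finsum_mem_coe_finset,
    Finset.sum_image fun a ha a' ha' heq =>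
      grow_injOn (mem_addFinset.mp ha) (mem_addFinset.mp ha') heq]
  refine Finset.sum_congr rfl fun a _ => ?_
  push_cast
  ring

lemma addFinset_eq (p : YPart) :
    addFinset p = insert 0 ((remFinset p).image (· + 1)) := by
  ext a
  simp only [mem_addFinset, Finset.mem_insert, Finset.mem_image, mem_remFinset]
  constructor
  · rintro (rfl | hlt)
    · exact Or.inl rfl
    · right
      rcases a with _ | b
      · exact absurd hlt (by simp)
      · exact ⟨b, by simpa [Removable] using hlt, rfl⟩
  · rintro (rfl | ⟨b, hb, rfl⟩)
    · exact Or.inl rfl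
    · right
      simpa [Removable] using hb

lemma alt_sum (p : YPart) (g : ℕ → ℤ) :
    ∑ a ∈ addFinset p, g a = g 0 + ∑ r ∈ remFinset p, g (r + 1) := by
  rw [addFinset_eq, Finset.sum_insert (by simp), Finset.sum_image (by intro x _ y _ h; simpa using h)]

lemma diag_sum (p : YPart) :
    (∑ a ∈ addFinset p, (-1 : ℤ) ^ (p.part a))
      - (∑ r ∈ remFinset p, (-1 : ℤ) ^ (p.part r)) = 1 := by
  obtain ⟨N, hN⟩ := p.finite'
  rw [alt_sum p (fun n => (-1 : ℤ) ^ (p.part n))]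
  have hsub : remFinset p ⊆ Finset.range N := by
    intro r hr
    simp only [mem_remFinset] at hr
    have hpos := removable_pos hr
    simp only [Finset.mem_range]
    by_contra hco
    push_neg at hco
    rw [hN r (by omega)] at hpos
    omega
  have htel : ∑ r ∈ remFinset p, ((-1 : ℤ) ^ (p.part (r + 1)) - (-1) ^ (p.part r))
      = ∑ r ∈ Finset.range N, ((-1 : ℤ) ^ (p.part (r + 1)) - (-1) ^ (p.part r)) := by
    apply Finset.sum_subset hsub
    intro r _ hr
    simp only [mem_remFinset] at hr
    unfold Removable at hr
    push_neg at hr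
    have h1 := p.antitone' (show r ≤ r + 1 by omega)
    have heq : p.part (r + 1) = p.part r := by omega
    rw [heq, sub_self]
  have htel2 : ∑ r ∈ Finset.range N, ((-1 : ℤ) ^ (p.part (r + 1)) - (-1) ^ (p.part r))
      = (-1) ^ (p.part N) - (-1) ^ (p.part 0) :=
    Finset.sum_range_sub (fun n => (-1 : ℤ) ^ (p.part n)) N
  have hkey : ∑ r ∈ remFinset p, ((-1 : ℤ) ^ (p.part (r + 1)) - (-1) ^ (p.part r))
      = 1 - (-1) ^ (p.part 0) := by
    rw [htel, htel2, hN N le_rfl, pow_zero]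
  rw [Finset.sum_sub_distrib] at hkey
  linarith

lemma swap_forward {p : YPart} {r a : ℕ} (hr : Removable p r) (ha : Addable (shrink p r) a)
    (hne : a ≠ r) : Addable p a ∧ Removable (grow p a) r := by
  have hpos := removable_pos hr
  have hA : Addable p a := by
    rcases ha with rfl | hlt
    · exact Or.inl rfl
    · right
      rw [shrink_part_ne hr hne] at hlt
      by_cases h1 : a - 1 = r
      · rw [h1, shrink_part_self hr] at hlt
        rw [h1]
        omega
      · rwa [shrink_part_ne hr h1] at hlt
  refine ⟨hA, ?_⟩
  unfold Removable
  have hrne : r ≠ a := fun h => hne h.symm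
  by_cases h2 : r + 1 = a
  · rw [grow_part_ne hA hrne, h2, grow_part_self hA]
    -- need p.part a + 1 < p.part r; use ha with a - 1 = r
    rcases ha with h0 | hlt
    · omega
    · rw [shrink_part_ne hr hne, show a - 1 = r by omega, shrink_part_self hr] at hlt
      omega
  · rw [grow_part_ne hA hrne, grow_part_ne hA h2]
    exact hr

lemma swap_backward {p : YPart} {a r : ℕ} (ha : Addable p a) (hr : Removable (grow p a) r)
    (hne : r ≠ a) : Removable p r ∧ Addable (shrink p r) a := by
  have hane : a ≠ r := fun h => hne h.symm
  have hR : Removable p r := by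
    unfold Removable at hr ⊢
    by_cases h2 : r + 1 = a
    · rw [grow_part_ne ha hne, h2, grow_part_self ha] at hr
      rw [h2]
      omega
    · rwa [grow_part_ne ha hne, grow_part_ne ha h2] at hr
  refine ⟨hR, ?_⟩
  rcases Nat.eq_zero_or_pos a with rfl | hapos
  · exact Or.inl rfl
  · right
    rw [shrink_part_ne hR hane]
    by_cases h1 : a - 1 = r
    · rw [h1, shrink_part_self hR]
      unfold Removable at hr
      have e1 : (grow p a).part (r + 1) = p.part a + 1 := by
        rw [show r + 1 = a by omega]
        exact grow_part_self ha
      have e2 : (grow p a).part r = p.part r := grow_part_ne ha hne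
      omega
    · rw [shrink_part_ne hR h1]
      rcases ha with h0 | hlt
      · omega
      · exact hlt

lemma grow_shrink_comm {p : YPart} {r a : ℕ} (hr : Removable p r)
    (ha : Addable (shrink p r) a) (hne : a ≠ r) :
    grow (shrink p r) a = shrink (grow p a) r := by
  obtain ⟨hA, hR'⟩ := swap_forward hr ha hne
  have hrne : r ≠ a := fun h => hne h.symm
  apply ext'
  intro k
  rcases eq_or_ne k a with rfl | hka
  · rw [grow_part_self ha, shrink_part_ne hr hne, shrink_part_ne hR' hne, grow_part_self hA]
  · rcases eq_or_ne k r with rfl | hkr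
    · rw [grow_part_ne ha hrne, shrink_part_self hr, shrink_part_self hR', grow_part_ne hA hrne]
    · rw [grow_part_ne ha hka, shrink_part_ne hr hkr, shrink_part_ne hR' hkr, grow_part_ne hA hka]

lemma offdiag_coef {p : YPart} {r a : ℕ} (hr : Removable p r)
    (ha : Addable (shrink p r) a) (hne : a ≠ r) :
    -(-1 : ℤ) ^ (Ssum p (r + 1)) * (-1) ^ (Ssum (shrink p r) a)
      = -((-1) ^ (Ssum p a) * (-(-1 : ℤ) ^ (Ssum (grow p a) (r + 1)))) := by
  obtain ⟨hA, hR'⟩ := swap_forward hr ha hne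
  have e1 := Ssum_shrink hr a
  have e2 := Ssum_grow hA (r + 1)
  rcases lt_or_gt_of_ne hne with hlt | hgt
  · -- a < r
    rw [if_neg (by omega)] at e1
    rw [if_pos (by omega)] at e2
    rw [add_zero] at e1
    rw [e1, e2, pow_succ]
    ring
  · -- r < a
    rw [if_pos (by omega)] at e1
    rw [if_neg (by omega)] at e2
    rw [add_zero] at e2
    rw [← e1, e2, pow_succ]
    ring

end YPart
namespace YPart

lemma diag1_coef {p : YPart} {r : ℕ} (hr : Removable p r) :
    -(-1 : ℤ) ^ (Ssum p (r + 1)) * (-1) ^ (Ssum (shrink p r) r) = -(-1) ^ (p.part r) := by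
  have e1 := Ssum_shrink hr r
  rw [if_neg (by omega), add_zero] at e1
  have e2 : Ssum p (r + 1) = Ssum p r + p.part r := by
    unfold Ssum; rw [Finset.sum_range_succ]
  rw [e1, e2, neg_mul, pow_cancel]

lemma diag2_coef {p : YPart} {a : ℕ} (hA : Addable p a) :
    (-1 : ℤ) ^ (Ssum p a) * (-(-1) ^ (Ssum (grow p a) (a + 1))) = (-1) ^ (p.part a) := by
  have e2 := Ssum_grow hA (a + 1)
  rw [if_pos (by omega)] at e2
  have e3 : Ssum p (a + 1) = Ssum p a + p.part a := by
    unfold Ssum; rw [Finset.sum_range_succ]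
  rw [e2, e3, show Ssum p a + p.part a + 1 = Ssum p a + (p.part a + 1) by ring]
  have h4 := pow_cancel (Ssum p a) (p.part a + 1)
  rw [pow_succ] at h4
  linear_combination -h4

lemma key_sum {K : Type*} [Field K] (p : YPart) (f : YPart → K) :
    (∑ r ∈ remFinset p, ((salpha (shrink p r) p : ℤ) : K) *
        ∑ a ∈ addFinset (shrink p r),
          ((salpha (shrink p r) (grow (shrink p r) a)
            * (aconj (grow (shrink p r) a) * aconj (shrink p r)) : ℤ) : K)
            * f (grow (shrink p r) a))
    + (∑ a ∈ addFinset p,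
        ((salpha p (grow p a) * (aconj (grow p a) * aconj p) : ℤ) : K) *
        ∑ r ∈ remFinset (grow p a),
          ((salpha (shrink (grow p a) r) (grow p a) : ℤ) : K) * f (shrink (grow p a) r))
    = f p := by
  have step1 : ∀ r ∈ remFinset p,
      ((salpha (shrink p r) p : ℤ) : K) *
        (∑ a ∈ addFinset (shrink p r),
          ((salpha (shrink p r) (grow (shrink p r) a)
            * (aconj (grow (shrink p r) a) * aconj (shrink p r)) : ℤ) : K)
            * f (grow (shrink p r) a))
      = ∑ a ∈ addFinset (shrink p r),
          ((-(-1 : ℤ) ^ (Ssum p (r + 1)) * (-1) ^ (Ssum (shrink p r) a) : ℤ) : K)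
            * f (grow (shrink p r) a) := by
    intro r hr
    have hrm : Removable p r := mem_remFinset.mp hr
    rw [salpha_shrink hrm, Finset.mul_sum]
    refine Finset.sum_congr rfl fun a ha => ?_
    rw [Dcoef (mem_addFinset.mp ha)]
    push_cast
    ring
  have step2 : ∀ a ∈ addFinset p,
      ((salpha p (grow p a) * (aconj (grow p a) * aconj p) : ℤ) : K) *
        (∑ r ∈ remFinset (grow p a),
          ((salpha (shrink (grow p a) r) (grow p a) : ℤ) : K) * f (shrink (grow p a) r))
      = ∑ r ∈ remFinset (grow p a),
          (((-1 : ℤ) ^ (Ssum p a) * (-(-1) ^ (Ssum (grow p a) (r + 1))) : ℤ) : K)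
            * f (shrink (grow p a) r) := by
    intro a ha
    have ham : Addable p a := mem_addFinset.mp ha
    rw [Dcoef ham, Finset.mul_sum]
    refine Finset.sum_congr rfl fun r hr => ?_
    rw [salpha_shrink (mem_remFinset.mp hr)]
    push_cast
    ring
  rw [Finset.sum_congr rfl step1, Finset.sum_congr rfl step2]
  have split1 : ∀ r ∈ remFinset p,
      (∑ a ∈ addFinset (shrink p r),
        ((-(-1 : ℤ) ^ (Ssum p (r + 1)) * (-1) ^ (Ssum (shrink p r) a) : ℤ) : K)
          * f (grow (shrink p r) a))
      = ((-(-1 : ℤ) ^ (p.part r) : ℤ) : K) * f p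
        + ∑ a ∈ (addFinset (shrink p r)).erase r,
          ((-(-1 : ℤ) ^ (Ssum p (r + 1)) * (-1) ^ (Ssum (shrink p r) a) : ℤ) : K)
            * f (grow (shrink p r) a) := by
    intro r hr
    have hrm : Removable p r := mem_remFinset.mp hr
    rw [← Finset.add_sum_erase _ _ (mem_addFinset.mpr (addable_shrink hrm))]
    congr 1
    rw [grow_shrink hrm, diag1_coef hrm]
  have split2 : ∀ a ∈ addFinset p,
      (∑ r ∈ remFinset (grow p a),
        (((-1 : ℤ) ^ (Ssum p a) * (-(-1) ^ (Ssum (grow p a) (r + 1))) : ℤ) : K)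
          * f (shrink (grow p a) r))
      = (((-1 : ℤ) ^ (p.part a) : ℤ) : K) * f p
        + ∑ r ∈ (remFinset (grow p a)).erase a,
          (((-1 : ℤ) ^ (Ssum p a) * (-(-1) ^ (Ssum (grow p a) (r + 1))) : ℤ) : K)
            * f (shrink (grow p a) r) := by
    intro a ha
    have ham : Addable p a := mem_addFinset.mp ha
    rw [← Finset.add_sum_erase _ _ (mem_remFinset.mpr (removable_grow ham))]
    congr 1
    rw [shrink_grow ham, diag2_coef ham]
  rw [Finset.sum_congr rfl split1, Finset.sum_congr rfl split2,
    Finset.sum_add_distrib, Finset.sum_add_distrib]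
  have hdiag : (∑ r ∈ remFinset p, ((-(-1 : ℤ) ^ (p.part r) : ℤ) : K) * f p)
      + (∑ a ∈ addFinset p, (((-1 : ℤ) ^ (p.part a) : ℤ) : K) * f p) = f p := by
    rw [← Finset.sum_mul, ← Finset.sum_mul, ← add_mul, ← Int.cast_sum, ← Int.cast_sum,
      ← Int.cast_add]
    have hz := diag_sum p
    have hs : (∑ r ∈ remFinset p, -(-1 : ℤ) ^ (p.part r))
        + ∑ a ∈ addFinset p, (-1 : ℤ) ^ (p.part a) = 1 := by
      rw [Finset.sum_neg_distrib]
      linarith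
    rw [hs, Int.cast_one, one_mul]
  have hoff : (∑ r ∈ remFinset p, ∑ a ∈ (addFinset (shrink p r)).erase r,
        ((-(-1 : ℤ) ^ (Ssum p (r + 1)) * (-1) ^ (Ssum (shrink p r) a) : ℤ) : K)
          * f (grow (shrink p r) a))
      + (∑ a ∈ addFinset p, ∑ r ∈ (remFinset (grow p a)).erase a,
        (((-1 : ℤ) ^ (Ssum p a) * (-(-1) ^ (Ssum (grow p a) (r + 1))) : ℤ) : K)
          * f (shrink (grow p a) r)) = 0 := by
    rw [Finset.sum_sigma' (remFinset p) (fun r => (addFinset (shrink p r)).erase r),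
      Finset.sum_sigma' (addFinset p) (fun a => (remFinset (grow p a)).erase a)]
    have hbij : (∑ x ∈ (remFinset p).sigma (fun r => (addFinset (shrink p r)).erase r),
          ((-(-1 : ℤ) ^ (Ssum p (x.1 + 1)) * (-1) ^ (Ssum (shrink p x.1) x.2) : ℤ) : K)
            * f (grow (shrink p x.1) x.2))
        = ∑ x ∈ (addFinset p).sigma (fun a => (remFinset (grow p a)).erase a),
          (-((((-1 : ℤ) ^ (Ssum p x.1) * (-(-1) ^ (Ssum (grow p x.1) (x.2 + 1))) : ℤ) : K)
            * f (shrink (grow p x.1) x.2))) := by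
      refine Finset.sum_nbij' (fun x => ⟨x.2, x.1⟩) (fun x => ⟨x.2, x.1⟩) ?_ ?_ ?_ ?_ ?_
      · rintro ⟨r, a⟩ hx
        simp only [Finset.mem_sigma, Finset.mem_erase, mem_remFinset, mem_addFinset] at hx ⊢
        obtain ⟨hr, hane, ha⟩ := hx
        obtain ⟨hA, hR⟩ := swap_forward hr ha hane
        exact ⟨hA, fun h => hane h.symm, hR⟩
      · rintro ⟨a, r⟩ hx
        simp only [Finset.mem_sigma, Finset.mem_erase, mem_remFinset, mem_addFinset] at hx ⊢
        obtain ⟨ha, hrne, hr⟩ := hx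
        obtain ⟨hR, hA⟩ := swap_backward ha hr hrne
        exact ⟨hR, fun h => hrne h.symm, hA⟩
      · rintro ⟨r, a⟩ _; rfl
      · rintro ⟨a, r⟩ _; rfl
      · rintro ⟨r, a⟩ hx
        simp only [Finset.mem_sigma, Finset.mem_erase, mem_remFinset, mem_addFinset] at hx
        obtain ⟨hr, hane, ha⟩ := hx
        rw [grow_shrink_comm hr ha hane, offdiag_coef hr ha hane]
        push_cast
        ring
    rw [hbij, Finset.sum_neg_distrib]
    ring
  linear_combination hdiag + hoff

end YPart

/-- `Y_α = (Y, s_α, a')` is an α-signed differential poset: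
`UD + DU = I` on `K̂Y` and `(U + D)𝐘 = 𝐘`. -/
theorem statement10 (K : Type*) [Field K] [CharZero K] :
    (∀ f : YPart → K,
      SDP.Uop K YPart.salpha (SDP.Dop K YPart.salpha YPart.aconj f) +
        SDP.Dop K YPart.salpha YPart.aconj (SDP.Uop K YPart.salpha f) = f) ∧
    (SDP.Uop K YPart.salpha (fun _ => 1) +
        SDP.Dop K YPart.salpha YPart.aconj (fun _ => 1) = (fun _ => (1 : K))) := by
  constructor
  · intro f
    funext p
    simp only [Pi.add_apply, YPart.Uop_eq, YPart.Dop_eq]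
    exact YPart.key_sum p f
  · funext p
    simp only [Pi.add_apply, YPart.Uop_eq, YPart.Dop_eq, mul_one]
    have e1 : ∀ r ∈ YPart.remFinset p,
        ((YPart.salpha (YPart.shrink p r) p : ℤ) : K)
          = ((-(-1 : ℤ) ^ (YPart.Ssum p (r + 1)) : ℤ) : K) := fun r hr => by
      rw [YPart.salpha_shrink (YPart.mem_remFinset.mp hr)]
    have e2 : ∀ a ∈ YPart.addFinset p,
        ((YPart.salpha p (YPart.grow p a)
          * (YPart.aconj (YPart.grow p a) * YPart.aconj p) : ℤ) : K)
          = (((-1 : ℤ) ^ (YPart.Ssum p a) : ℤ) : K) := fun a ha => by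
      rw [YPart.Dcoef (YPart.mem_addFinset.mp ha)]
    rw [Finset.sum_congr rfl e1, Finset.sum_congr rfl e2, ← Int.cast_sum, ← Int.cast_sum,
      ← Int.cast_add, show (1 : K) = ((1 : ℤ) : K) from (Int.cast_one).symm]
    congr 1
    rw [YPart.alt_sum p (fun n => (-1 : ℤ) ^ (YPart.Ssum p n)), Finset.sum_neg_distrib]
    have h0 : YPart.Ssum p 0 = 0 := by simp [YPart.Ssum]
    rw [h0, pow_zero]
    ring
end
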